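/- arXiv:2309.11191 — 8 statements merged into one kernel-verified Lean document; each statement's English description precedes it below -/
import Mathlib

section
/- The conjugation action of SO₃(ℂ) on the set {A ∈ M₃(ℂ) : A ≠ 0, A = Aᵀ, A² = 0} is transitive; that is, any two nonzero symmetric square-zero 3×3 complex matrices are conjugate by an element of SO₃(ℂ). (Note that for g ∈ SO₃(ℂ) one has g A g⁻¹ = g A gᵀ, so conjugation preserves symmetry.) -/
/-!
A symmetric `A` with `A * A = 0` satisfies `A * Aᵀ = 0`, so its rows span a totally isotropic
subspace of `ℂ³`, which is at most a line; symmetry and algebraic closedness then give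
`A = u uᵀ` with `u` isotropic. Conjugation by `g ∈ SO₃(ℂ)` sends `u uᵀ` to `(g u)(g u)ᵀ`, so it
suffices that `SO₃(ℂ)` acts transitively on nonzero isotropic vectors: completing `u` to a
hyperbolic pair `u, w` gives the orthonormal pair `e = u/2 + w`, `f = i (w - u/2)` with
`u = e + i f`, and the matrix with columns `e, f, e ⨯₃ f` lies in `SO₃(ℂ)` and maps `(1, i, 0)`
to `u`.
-/

open Matrix

section Field

variable {K : Type*} [Field K]

theorem exists_eq_smul_of_cross_eq_zero {x y : Fin 3 → K} (hx : x ≠ 0) (h : x ⨯₃ y = 0) :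
    ∃ c : K, y = c • x := by
  by_contra! hc
  exact crossProduct_ne_zero_iff_linearIndependent.mpr
    ((LinearIndependent.pair_iff' hx).mpr fun a => (hc a).symm) h

theorem exists_eq_smul_of_isotropic {x y : Fin 3 → K} (hx : x ≠ 0) (hxx : x ⬝ᵥ x = 0)
    (hxy : x ⬝ᵥ y = 0) (hyy : y ⬝ᵥ y = 0) : ∃ c : K, y = c • x := by
  obtain ⟨c, hc⟩ : ∃ c : K, x ⨯₃ y = c • x := by
    refine exists_eq_smul_of_cross_eq_zero hx ?_
    rw [cross_cross_eq_smul_sub_smul', hxy, hxx, zero_smul, zero_smul, sub_zero]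
  have hc0 : c = 0 := by
    have h : y ⨯₃ (x ⨯₃ y) = 0 := by
      simp [cross_cross_eq_smul_sub_smul', hyy, hxy]
    rw [hc, map_smul, ← cross_anticomm, hc, smul_neg, smul_smul, neg_eq_zero] at h
    exact mul_self_eq_zero.mp ((smul_eq_zero.mp h).resolve_right hx)
  exact exists_eq_smul_of_cross_eq_zero hx (by rw [hc, hc0, zero_smul])

theorem Matrix.IsSymm.exists_eq_smul_vecMulVec_self {n : Type*} {A : Matrix n n K}
    (hA : A.IsSymm) {x : n → K} (hx : x ≠ 0) (hrows : ∀ i, ∃ c : K, A i = c • x) :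
    ∃ γ : K, A = γ • vecMulVec x x := by
  choose c hc using hrows
  obtain ⟨k, hk⟩ : ∃ k, x k ≠ 0 := Function.ne_iff.mp hx
  have hA_eq : ∀ i j, A i j = c i * x j := fun i j => by rw [hc i]; rfl
  refine ⟨c k / x k, Matrix.ext fun i j => ?_⟩
  have hsymm : c i * x k = c k * x i := by
    rw [← hA_eq, ← hA_eq, ← hA.apply k i]
  rw [hA_eq, Matrix.smul_apply, vecMulVec_apply, smul_eq_mul, div_mul_eq_mul_div,
    eq_div_iff hk]
  linear_combination x j * hsymm

theorem Matrix.IsSymm.exists_isotropic_eq_vecMulVec [IsAlgClosed K]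
    {A : Matrix (Fin 3) (Fin 3) K} (hA : A.IsSymm) (hA2 : A * A = 0) :
    ∃ u : Fin 3 → K, u ⬝ᵥ u = 0 ∧ A = vecMulVec u u := by
  by_cases hA0 : A = 0
  · exact ⟨0, by simp, by simp [hA0]⟩
  have hrows : ∀ i j, A i ⬝ᵥ A j = 0 := fun i j =>
    calc A i ⬝ᵥ A j = (A * Aᵀ) i j := rfl
      _ = 0 := by rw [hA.eq, hA2, Matrix.zero_apply]
  obtain ⟨i, hi⟩ : ∃ i, A i ≠ 0 := by
    by_contra! h
    exact hA0 (Matrix.ext fun i j => by rw [h i]; rfl)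
  obtain ⟨γ, hγ⟩ := hA.exists_eq_smul_vecMulVec_self hi fun j =>
    exists_eq_smul_of_isotropic hi (hrows i i) (hrows i j) (hrows j j)
  obtain ⟨s, hs⟩ := IsAlgClosed.exists_pow_nat_eq γ two_pos
  refine ⟨s • A i, ?_, ?_⟩
  · rw [smul_dotProduct, dotProduct_smul, hrows, smul_zero, smul_zero]
  · conv_lhs => rw [hγ]
    rw [smul_vecMulVec, vecMulVec_smul, smul_smul, ← sq, hs]

theorem exists_dotProduct_eq_one_of_isotropic [NeZero (2 : K)] {n : Type*} [Fintype n]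
    [DecidableEq n] {u : n → K} (hu : u ≠ 0) (huu : u ⬝ᵥ u = 0) :
    ∃ w : n → K, u ⬝ᵥ w = 1 ∧ w ⬝ᵥ w = 0 := by
  obtain ⟨i, hi⟩ : ∃ i, u i ≠ 0 := Function.ne_iff.mp hu
  refine ⟨(u i)⁻¹ • Pi.single i 1 - (2 * u i ^ 2)⁻¹ • u, ?_, ?_⟩
  · simp only [dotProduct_sub, dotProduct_smul, dotProduct_single, huu, smul_eq_mul]
    field_simp
    ring
  · simp only [dotProduct_sub, sub_dotProduct, dotProduct_smul, smul_dotProduct,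
      dotProduct_single, single_dotProduct, huu, smul_eq_mul, Pi.sub_apply, Pi.smul_apply,
      Pi.single_eq_same]
    field_simp
    ring

end Field

section CommRing

variable {R : Type*} [CommRing R]

theorem exists_special_orthogonal_of_orthonormal {e f : Fin 3 → R} (hee : e ⬝ᵥ e = 1)
    (hff : f ⬝ᵥ f = 1) (hef : e ⬝ᵥ f = 0) :
    ∃ g : Matrix (Fin 3) (Fin 3) R, gᵀ * g = 1 ∧ g.det = 1 ∧
      ∀ v, g *ᵥ v = v 0 • e + v 1 • f + v 2 • e ⨯₃ f := by
  have hhh : e ⨯₃ f ⬝ᵥ e ⨯₃ f = 1 := by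
    rw [cross_dot_cross, hee, hff, hef, dotProduct_comm, hef]; ring
  refine ⟨(of ![e, f, e ⨯₃ f])ᵀ, ?_, ?_, fun v => ?_⟩
  · ext a b
    change ![e, f, e ⨯₃ f] a ⬝ᵥ ![e, f, e ⨯₃ f] b = _
    fin_cases a <;> fin_cases b <;>
      simp [one_apply, hee, hff, hhh, hef, dotProduct_comm f e, dot_self_cross, dot_cross_self,
        dotProduct_comm (e ⨯₃ f)]
  · rw [det_transpose]
    change det ![e, f, e ⨯₃ f] = 1
    rw [← triple_product_eq_det, triple_product_permutation,
      triple_product_permutation, hhh]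
  · ext k
    simp [mulVec, dotProduct, Fin.sum_univ_three, mul_comm]

end CommRing

theorem exists_special_orthogonal_mulVec_eq_of_isotropic {u : Fin 3 → ℂ} (hu : u ≠ 0)
    (huu : u ⬝ᵥ u = 0) :
    ∃ g : Matrix (Fin 3) (Fin 3) ℂ, gᵀ * g = 1 ∧ g.det = 1 ∧ g *ᵥ ![1, Complex.I, 0] = u := by
  obtain ⟨w, huw, hww⟩ := exists_dotProduct_eq_one_of_isotropic hu huu
  have hwu : w ⬝ᵥ u = 1 := by rw [dotProduct_comm, huw]
  obtain ⟨g, hg, hdet, hmul⟩ := exists_special_orthogonal_of_orthonormal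
    (e := (2 : ℂ)⁻¹ • u + w) (f := Complex.I • (w - (2 : ℂ)⁻¹ • u))
    (by simp only [add_dotProduct, dotProduct_add, smul_dotProduct, dotProduct_smul, huu, huw,
          hwu, hww, smul_eq_mul]; ring)
    (by simp only [sub_dotProduct, dotProduct_sub, smul_dotProduct, dotProduct_smul, huu, huw,
          hwu, hww, smul_eq_mul]; linear_combination (-1 : ℂ) * Complex.I_sq)
    (by simp only [add_dotProduct, dotProduct_sub, smul_dotProduct,
          dotProduct_smul, huu, huw, hwu, hww, smul_eq_mul]; ring)
  refine ⟨g, hg, hdet, ?_⟩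
  rw [hmul]
  simp only [cons_val_zero, cons_val_one, cons_val_two, tail_cons, head_cons, one_smul, zero_smul,
    add_zero, smul_smul, Complex.I_mul_I]
  module

theorem exists_special_orthogonal_mulVec_eq {u v : Fin 3 → ℂ} (hu : u ≠ 0) (huu : u ⬝ᵥ u = 0)
    (hv : v ≠ 0) (hvv : v ⬝ᵥ v = 0) :
    ∃ g : Matrix (Fin 3) (Fin 3) ℂ, gᵀ * g = 1 ∧ g.det = 1 ∧ g *ᵥ u = v := by
  obtain ⟨g₁, hg₁, hdet₁, rfl⟩ := exists_special_orthogonal_mulVec_eq_of_isotropic hu huu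
  obtain ⟨g₂, hg₂, hdet₂, rfl⟩ := exists_special_orthogonal_mulVec_eq_of_isotropic hv hvv
  refine ⟨g₂ * g₁ᵀ, ?_, ?_, ?_⟩
  · rw [transpose_mul, transpose_transpose, Matrix.mul_assoc, ← Matrix.mul_assoc g₂ᵀ, hg₂,
      Matrix.one_mul, mul_eq_one_comm.mp hg₁]
  · rw [det_mul, det_transpose, hdet₁, hdet₂, mul_one]
  · rw [← mulVec_mulVec, mulVec_mulVec _ g₁ᵀ, hg₁, one_mulVec]

/-- The conjugation action of `SO₃(ℂ)` on nonzero symmetric square-zero `3 × 3`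
complex matrices is transitive (note `g A g⁻¹ = g A gᵀ` for `g ∈ SO₃(ℂ)`). -/
theorem stmt_8 (A B : Matrix (Fin 3) (Fin 3) ℂ)
    (hA0 : A ≠ 0) (hAsym : A = Aᵀ) (hAsq : A * A = 0)
    (hB0 : B ≠ 0) (hBsym : B = Bᵀ) (hBsq : B * B = 0) :
    ∃ g : Matrix (Fin 3) (Fin 3) ℂ, gᵀ * g = 1 ∧ g.det = 1 ∧ g * A * gᵀ = B := by
  obtain ⟨u, huu, rfl⟩ := IsSymm.exists_isotropic_eq_vecMulVec hAsym.symm hAsq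
  obtain ⟨v, hvv, rfl⟩ := IsSymm.exists_isotropic_eq_vecMulVec hBsym.symm hBsq
  have hu : u ≠ 0 := by rintro rfl; simp at hA0
  have hv : v ≠ 0 := by rintro rfl; simp at hB0
  obtain ⟨g, hg, hdet, hgu⟩ := exists_special_orthogonal_mulVec_eq hu huu hv hvv
  refine ⟨g, hg, hdet, ?_⟩
  rw [mul_vecMulVec, vecMulVec_mul, vecMul_transpose, hgu]
end

section
/- Define x : ℂ² → ℂ³ by x(v) = (v₁² − v₂², i(v₁² + v₂²), 2v₁v₂) and φ : ℂ² → M₃(ℂ) by φ(v)_{jk} = x(v)_j · x(v)_k. Then: (a) for every v ≠ 0, φ(v) is a nonzero symmetric matrix with φ(v)² = 0; (b) φ maps ℂ² \ {0} onto the set {A ∈ M₃(ℂ) : A ≠ 0, A = Aᵀ, A² = 0}; (c) for v, w ≠ 0 one has φ(v) = φ(w) if and only if w ∈ {v, iv, −v, −iv}. Consequently φ induces a bijection from the quotient of ℂ² \ {0} by the ℤ/4ℤ-action generated by scalar multiplication by i onto the set of nonzero symmetric square-zero 3×3 complex matrices. -/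
/-!
`φ(v) = x(v) x(v)ᵀ` and `x(v)` is isotropic, so `φ(v)² = (x(v) ⬝ x(v)) φ(v) = 0`.
Conversely `A² = 0` forces `2 rank A ≤ 3`, so a symmetric such `A` is `x xᵀ` over `ℂ`,
with `x` isotropic because `A² = (x ⬝ x) A`, and `A` determines `x` up to sign.
Finally `x` maps `ℂ²` onto the isotropic cone, `x(v)` determines `v vᵀ`, hence `v` up to
sign, and `x(iv) = -x(v)`.
-/

open Matrix

/-- `x(v) = (v₁² − v₂², i(v₁² + v₂²), 2v₁v₂)`. -/
noncomputable def xmap (v : Fin 2 → ℂ) : Fin 3 → ℂ :=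
  ![v 0 ^ 2 - v 1 ^ 2, Complex.I * (v 0 ^ 2 + v 1 ^ 2), 2 * v 0 * v 1]

/-- `φ(v) = x(v) x(v)ᵀ`. -/
noncomputable def phimap (v : Fin 2 → ℂ) : Matrix (Fin 3) (Fin 3) ℂ :=
  Matrix.of fun i j => xmap v i * xmap v j

namespace Matrix

variable {n R K : Type*}

theorem vecMulVec_self_mul_self [Fintype n] [CommSemiring R] (x : n → R) :
    vecMulVec x x * vecMulVec x x = (x ⬝ᵥ x) • vecMulVec x x := by
  rw [vecMulVec_mul_vecMulVec, vecMulVec_smul]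

theorem vecMulVec_self_mul_self_eq_zero_iff [Fintype n] [CommRing R] [NoZeroDivisors R]
    {x : n → R} (hx : x ≠ 0) : vecMulVec x x * vecMulVec x x = 0 ↔ x ⬝ᵥ x = 0 := by
  rw [vecMulVec_self_mul_self, smul_eq_zero, vecMulVec_eq_zero, or_self, or_iff_left hx]

theorem vecMulVec_self_inj [CommRing R] [NoZeroDivisors R] {x y : n → R} :
    vecMulVec x x = vecMulVec y y ↔ y = x ∨ y = -x := by
  refine ⟨fun h ↦ ?_, by rintro (rfl | rfl) <;> simp⟩
  have hentry (i j : n) : x i * x j = y i * y j := congr($h i j)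
  by_cases hx : x = 0
  · subst hx
    simpa [eq_comm (a := (0 : Matrix n n R))] using h
  obtain ⟨i, hi⟩ := Function.ne_iff.mp hx
  rcases mul_self_eq_mul_self_iff.mp (hentry i i).symm with hyi | hyi
  · left
    funext j
    exact (mul_left_cancel₀ hi (by linear_combination hentry i j + y j * hyi)).symm
  · right
    funext j
    refine (mul_left_cancel₀ hi ?_).symm
    simp only [Pi.neg_apply]
    linear_combination -hentry i j - y j * hyi

theorem exists_eq_vecMulVec_of_rank_le_one [Fintype n] [Field K] {A : Matrix n n K}
    (hA : A.rank ≤ 1) : ∃ u c : n → K, A = vecMulVec u c := by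
  rw [rank_eq_finrank_span_cols, Submodule.finrank_le_one_iff_isPrincipal] at hA
  obtain ⟨u, hu⟩ := hA.principal
  have hcol (j : n) : ∃ c : K, c • u = A.col j := by
    rw [← Submodule.mem_span_singleton, ← hu]
    exact Submodule.subset_span ⟨j, rfl⟩
  choose c hc using hcol
  refine ⟨u, c, ext fun i j ↦ ?_⟩
  rw [vecMulVec_apply, ← col_apply A j i, ← hc j, Pi.smul_apply, smul_eq_mul, mul_comm]

theorem exists_eq_vecMulVec_self_of_isSymm [Fintype n] [Field K] [IsAlgClosed K]
    {A : Matrix n n K} (hsym : A.IsSymm) (hA : A.rank ≤ 1) :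
    ∃ x : n → K, A = vecMulVec x x := by
  obtain ⟨u, c, rfl⟩ := exists_eq_vecMulVec_of_rank_le_one hA
  by_cases hu : u = 0
  · exact ⟨0, by simp [hu]⟩
  obtain ⟨i, hi⟩ := Function.ne_iff.mp hu
  have hc : c = (c i / u i) • u := by
    funext k
    have hik : u k * c i = u i * c k := congr($hsym i k)
    rw [Pi.smul_apply, smul_eq_mul, div_mul_eq_mul_div, eq_div_iff hi]
    linear_combination -hik
  obtain ⟨s, hs⟩ := IsAlgClosed.exists_pow_nat_eq (c i / u i) two_pos
  refine ⟨s • u, ?_⟩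
  rw [hc, vecMulVec_smul, smul_vecMulVec, vecMulVec_smul, smul_smul, ← sq, hs]

end Matrix

theorem phimap_eq_vecMulVec (v : Fin 2 → ℂ) : phimap v = vecMulVec (xmap v) (xmap v) := rfl

theorem xmap_dotProduct_self (v : Fin 2 → ℂ) : xmap v ⬝ᵥ xmap v = 0 := by
  simp only [dotProduct, xmap, Fin.sum_univ_three, cons_val_zero, cons_val_one, cons_val]
  linear_combination (v 0 ^ 2 + v 1 ^ 2) ^ 2 * Complex.I_sq

theorem xmap_smul (c : ℂ) (v : Fin 2 → ℂ) : xmap (c • v) = c ^ 2 • xmap v := by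
  funext i
  fin_cases i <;>
    simp only [xmap, Pi.smul_apply, smul_eq_mul, Fin.zero_eta, Fin.mk_one, Fin.reduceFinMk,
      cons_val_zero, cons_val_one, cons_val] <;> ring

theorem xmap_smul_I (v : Fin 2 → ℂ) : xmap (Complex.I • v) = -xmap v := by
  rw [xmap_smul, Complex.I_sq, neg_one_smul]

theorem xmap_neg (v : Fin 2 → ℂ) : xmap (-v) = xmap v := by
  rw [← neg_one_smul ℂ v, xmap_smul, neg_one_sq, one_smul]

theorem xmap_eq_xmap_iff {v w : Fin 2 → ℂ} : xmap w = xmap v ↔ w = v ∨ w = -v := by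
  refine ⟨fun h ↦ ?_, by rintro (rfl | rfl) <;> simp only [xmap_neg]⟩
  have h0 := congr_fun h 0
  have h1 := congr_fun h 1
  have h2 := congr_fun h 2
  simp only [xmap, cons_val_zero, cons_val_one, cons_val] at h0 h1 h2
  have hsum : v 0 ^ 2 + v 1 ^ 2 = w 0 ^ 2 + w 1 ^ 2 :=
    (mul_left_cancel₀ Complex.I_ne_zero h1).symm
  have e00 : v 0 * v 0 = w 0 * w 0 := by linear_combination (hsum - h0) / 2
  have e11 : v 1 * v 1 = w 1 * w 1 := by linear_combination (hsum + h0) / 2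
  have e01 : v 0 * v 1 = w 0 * w 1 := by linear_combination -h2 / 2
  have e10 : v 1 * v 0 = w 1 * w 0 := by linear_combination -h2 / 2
  rw [← vecMulVec_self_inj]
  ext i j
  fin_cases i <;> fin_cases j <;> simp [vecMulVec_apply, e00, e11, e01, e10]

theorem xmap_eq_zero_iff {v : Fin 2 → ℂ} : xmap v = 0 ↔ v = 0 := by
  have hxmap0 : xmap 0 = 0 := by simpa using xmap_smul 0 0
  rw [← hxmap0, xmap_eq_xmap_iff, neg_zero, or_self]

theorem exists_xmap_eq {x : Fin 3 → ℂ} (hx : x ⬝ᵥ x = 0) : ∃ v, xmap v = x := by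
  simp only [dotProduct, Fin.sum_univ_three] at hx
  -- `a ^ 2` and `b ^ 2` solve `a ^ 2 - b ^ 2 = x 0`, `i (a ^ 2 + b ^ 2) = x 1`
  obtain ⟨a, ha⟩ := IsAlgClosed.exists_pow_nat_eq ((x 0 - Complex.I * x 1) / 2) two_pos
  obtain ⟨b, hb⟩ := IsAlgClosed.exists_pow_nat_eq ((-x 0 - Complex.I * x 1) / 2) two_pos
  have hab : (2 * a * b) ^ 2 = x 2 ^ 2 := by
    linear_combination 4 * b ^ 2 * ha + (2 * x 0 - 2 * Complex.I * x 1) * hb +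
      x 1 ^ 2 * Complex.I_sq - hx
  obtain ⟨b', hb', hab'⟩ : ∃ b', b' ^ 2 = b ^ 2 ∧ 2 * a * b' = x 2 := by
    rcases sq_eq_sq_iff_eq_or_eq_neg.mp hab with h | h
    · exact ⟨b, rfl, h⟩
    · exact ⟨-b, neg_sq b, by linear_combination -h⟩
  refine ⟨![a, b'], funext fun i ↦ ?_⟩
  fin_cases i <;> simp only [xmap, Fin.zero_eta, Fin.mk_one, Fin.reduceFinMk, cons_val]
  · linear_combination ha - hb' - hb
  · linear_combination Complex.I * (ha + hb' + hb) - x 1 * Complex.I_sq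
  · exact hab'

/-- `φ` maps `ℂ² \ {0}` onto the nonzero symmetric square-zero `3 × 3` complex matrices,
with fibers exactly the orbits `{v, iv, −v, −iv}` of the `ℤ/4`-action generated by
multiplication by `i`. -/
theorem stmt_9 :
    (∀ v : Fin 2 → ℂ, v ≠ 0 →
      phimap v ≠ 0 ∧ phimap v = (phimap v)ᵀ ∧ phimap v * phimap v = 0) ∧
    (∀ A : Matrix (Fin 3) (Fin 3) ℂ, A ≠ 0 → A = Aᵀ → A * A = 0 →
      ∃ v : Fin 2 → ℂ, v ≠ 0 ∧ phimap v = A) ∧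
    (∀ v w : Fin 2 → ℂ, v ≠ 0 → w ≠ 0 →
      (phimap v = phimap w ↔
        (w = v ∨ w = Complex.I • v ∨ w = -v ∨ w = -(Complex.I • v)))) := by
  refine ⟨fun v hv ↦ ?_, fun A hA0 hsym hA2 ↦ ?_, fun v w _ _ ↦ ?_⟩
  · have hx : xmap v ≠ 0 := xmap_eq_zero_iff.not.mpr hv
    rw [phimap_eq_vecMulVec]
    exact ⟨vecMulVec_ne_zero hx hx, (transpose_vecMulVec _ _).symm,
      (vecMulVec_self_mul_self_eq_zero_iff hx).mpr (xmap_dotProduct_self v)⟩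
  · have hrank : A.rank ≤ 1 := by
      have := rank_add_rank_le_card_of_mul_eq_zero hA2
      rw [Fintype.card_fin] at this
      omega
    obtain ⟨x, rfl⟩ := exists_eq_vecMulVec_self_of_isSymm hsym.symm hrank
    have hx : x ≠ 0 := by rintro rfl; simp at hA0
    obtain ⟨v, rfl⟩ := exists_xmap_eq ((vecMulVec_self_mul_self_eq_zero_iff hx).mp hA2)
    exact ⟨v, xmap_eq_zero_iff.not.mp hx, rfl⟩
  · rw [phimap_eq_vecMulVec, phimap_eq_vecMulVec, vecMulVec_self_inj, ← xmap_smul_I,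
      xmap_eq_xmap_iff, xmap_eq_xmap_iff]
    tauto
end

section
/- If X ∈ sp₄(ℂ) satisfies X₁₁ = 0 and X₂₂ = 0 (both diagonal 2×2 blocks vanish) and rank X ≤ 1, then X = 0. Equivalently, every nonzero rank-one element of sp₄(ℂ) has a nonzero entry in one of its two diagonal 2×2 blocks; in the paper's terms, the minimal nilpotent orbit of sp₄ (which consists of the rank-one elements) has empty intersection with the orthogonal complement of the symmetric subalgebra k = sp₂ ⊕ sp₂. -/
open Matrix

/-- The matrix `Ω = diag(ε, ε)` with `ε = [[0,1],[−1,0]]`. -/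
noncomputable def OmegaMat : Matrix (Fin 4) (Fin 4) ℂ :=
  !![0, 1, 0, 0; -1, 0, 0, 0; 0, 0, 0, 1; 0, 0, -1, 0]

lemma minor_aux (X : Matrix (Fin 4) (Fin 4) ℂ) (hrank : X.rank ≤ 1)
    (i k j l : Fin 4) : X i j * X k l - X i l * X k j = 0 := by
  by_contra h
  set u : Fin 4 → ℂ := fun r => X r j with hu
  set v : Fin 4 → ℂ := fun r => X r l with hv
  have hli : LinearIndependent ℂ ![u, v] := by
    rw [LinearIndependent.pair_iff]
    intro s t hst
    have h1 : s * X i j + t * X i l = 0 := congrFun hst i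
    have h2 : s * X k j + t * X k l = 0 := congrFun hst k
    constructor
    · by_contra hs
      apply h
      have := congrArg (· * X k l) h1
      have := congrArg (· * X i l) h2
      field_simp at *
      have key : s * (X i j * X k l - X i l * X k j) = 0 := by ring_nf; linear_combination X k l * h1 - X i l * h2
      rcases mul_eq_zero.mp key with h' | h'
      · exact absurd h' hs
      · exact h'
    · by_contra ht
      apply h
      have key : t * (X i j * X k l - X i l * X k j) = 0 := by
        linear_combination (-(X k j)) * h1 + X i j * h2
      rcases mul_eq_zero.mp key with h' | h'
      · exact absurd h' ht
      · exact h'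
  have hsub : Submodule.span ℂ (Set.range ![u, v]) ≤ LinearMap.range X.mulVecLin := by
    rw [Submodule.span_le]
    rintro x ⟨r, rfl⟩
    fin_cases r
    · exact ⟨Pi.single j 1, by ext r; simp [Matrix.mulVecLin_apply, Matrix.mulVec_single, hu]⟩
    · exact ⟨Pi.single l 1, by ext r; simp [Matrix.mulVecLin_apply, Matrix.mulVec_single, hv]⟩
  have h2le : (2 : ℕ) ≤ X.rank := by
    have := finrank_span_eq_card hli
    have hle := Submodule.finrank_mono hsub
    rw [this] at hle
    simpa [Matrix.rank] using hle
  omega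

/-- If `X ∈ sp₄(ℂ)` has both diagonal `2 × 2` blocks zero and rank at most `1`, then
`X = 0`: the minimal nilpotent orbit of `sp₄` misses the orthogonal complement of
`sp₂ ⊕ sp₂`. -/
theorem stmt_10 (X : Matrix (Fin 4) (Fin 4) ℂ)
    (hsp : Xᵀ * OmegaMat + OmegaMat * X = 0)
    (hblock : ∀ i j : Fin 4,
      (((i : ℕ) < 2 ∧ (j : ℕ) < 2) ∨ (2 ≤ (i : ℕ) ∧ 2 ≤ (j : ℕ))) → X i j = 0)
    (hrank : X.rank ≤ 1) :
    X = 0 := by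
  have b00 : X 0 0 = 0 := hblock 0 0 (by norm_num)
  have b01 : X 0 1 = 0 := hblock 0 1 (by norm_num)
  have b10 : X 1 0 = 0 := hblock 1 0 (by norm_num)
  have b11 : X 1 1 = 0 := hblock 1 1 (by norm_num)
  have b22 : X 2 2 = 0 := hblock 2 2 (by norm_num)
  have b23 : X 2 3 = 0 := hblock 2 3 (by decide)
  have b32 : X 3 2 = 0 := hblock 3 2 (by decide)
  have b33 : X 3 3 = 0 := hblock 3 3 (by decide)
  have hsp' : ∀ i j : Fin 4, (Xᵀ * OmegaMat + OmegaMat * X) i j = 0 := by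
    intro i j; rw [hsp]; rfl
  have e02 := hsp' 0 2
  have e03 := hsp' 0 3
  have e12 := hsp' 1 2
  have e13 := hsp' 1 3
  simp [OmegaMat, Matrix.add_apply, Matrix.mul_apply, Fin.sum_univ_four,
    Matrix.transpose_apply, Matrix.vecMul, dotProduct] at e02 e03 e12 e13
  have ha : X 0 2 = 0 := by
    have hm := minor_aux X hrank 0 3 1 2
    rw [b01, b32] at hm
    exact mul_self_eq_zero.mp (by linear_combination hm - X 0 2 * e12)
  have hb : X 0 3 = 0 := by
    have hm := minor_aux X hrank 0 2 1 3
    rw [b01, b23] at hm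
    exact mul_self_eq_zero.mp (by linear_combination -hm - X 0 3 * e13)
  have hc : X 1 2 = 0 := by
    have hm := minor_aux X hrank 1 3 0 2
    rw [b10, b32] at hm
    exact mul_self_eq_zero.mp (by linear_combination -hm + X 1 2 * e02)
  have hd : X 1 3 = 0 := by
    have hm := minor_aux X hrank 1 2 0 3
    rw [b10, b23] at hm
    exact mul_self_eq_zero.mp (by linear_combination hm + X 1 3 * e03)
  have h20 : X 2 0 = 0 := by linear_combination e03 - hd
  have h21 : X 2 1 = 0 := by linear_combination e13 + hb
  have h30 : X 3 0 = 0 := by linear_combination -e02 + hc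
  have h31 : X 3 1 = 0 := by linear_combination -e12 - ha
  ext i j
  fin_cases i <;> fin_cases j <;> simp_all
end

section
/- For a partition τ of n, the following are equivalent: (i) for every partition μ of n with μ ⊴ τ and μ ≠ τ one has N(μ) ≥ N(τ) + 4; (ii) τᵢ − τᵢ₊₁ ≤ 1 for every i ≥ 1. (Via the dimension formula and the identification of the closure order with dominance, (i) says that the boundary of the closure of the nilpotent GL_n-orbit with Jordan type τ has codimension at least 4.) -/
/-- `τ` is a partition of `n`: a nonincreasing, finitely supported sequence with sum `n`. -/
def IsPartitionOf (n : ℕ) (τ : ℕ → ℕ) : Prop :=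
  (∀ i, τ (i + 1) ≤ τ i) ∧ (Function.support τ).Finite ∧ ∑ᶠ i, τ i = n

/-- Dominance order on partitions: all partial sums of `μ` are at most those of `τ`. -/
def Dominates (μ τ : ℕ → ℕ) : Prop :=
  ∀ k : ℕ, ∑ i ∈ Finset.range k, μ i ≤ ∑ i ∈ Finset.range k, τ i

/-- `N(τ) = Σᵢ (2i+1) τᵢ` (0-based), so that `n² − N(τ)` is the dimension of the
nilpotent orbit of Jordan type `τ` in `gl_n`. -/
noncomputable def Nstat (τ : ℕ → ℕ) : ℕ := ∑ᶠ i, (2 * i + 1) * τ i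

open Finset

/-- parts vanish from index `n` on -/
lemma part_zero {n : ℕ} {τ : ℕ → ℕ} (hτ : IsPartitionOf n τ) : ∀ i, n ≤ i → τ i = 0 := by
  obtain ⟨hmono, hfin, hsum⟩ := hτ
  intro i hi
  by_contra h0
  have hant : Antitone τ := antitone_nat_of_succ_le hmono
  have h1 : ∀ j ∈ range (i+1), 1 ≤ τ j := by
    intro j hj
    have : τ i ≤ τ j := hant (by simpa using Nat.lt_succ_iff.mp (mem_range.mp hj))
    omega
  have hle : ∑ j ∈ range (i+1), τ j ≤ n := by
    have hsub : Function.support τ ⊆ ↑(hfin.toFinset ∪ range (i+1)) :=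
      fun x hx => Finset.mem_coe.mpr (Finset.mem_union_left _ (hfin.mem_toFinset.mpr hx))
    rw [← hsum, finsum_eq_sum_of_support_subset τ hsub]
    exact Finset.sum_le_sum_of_subset (Finset.subset_union_right)
  have hge : i + 1 ≤ ∑ j ∈ range (i+1), τ j := by
    calc i + 1 = ∑ _j ∈ range (i+1), 1 := by simp
      _ ≤ _ := Finset.sum_le_sum h1
  omega

lemma psum_eq {n : ℕ} {τ : ℕ → ℕ} (hτ : IsPartitionOf n τ) {k : ℕ} (hk : n ≤ k) :
    ∑ i ∈ range k, τ i = n := by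
  have hsub : Function.support τ ⊆ ↑(range k) := by
    intro x hx
    simp only [Function.mem_support] at hx
    simp only [coe_range, Set.mem_Iio]
    by_contra h; exact hx (part_zero hτ x (by omega))
  rw [← hτ.2.2, finsum_eq_sum_of_support_subset τ hsub]

lemma nstat_eq {n : ℕ} {τ : ℕ → ℕ} (hτ : IsPartitionOf n τ) :
    Nstat τ = ∑ i ∈ range n, (2 * i + 1) * τ i := by
  apply finsum_eq_sum_of_support_subset
  intro x hx
  simp only [Function.mem_support] at hx
  simp only [coe_range, Set.mem_Iio]
  by_contra h
  rw [part_zero hτ x (by omega)] at hx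
  simp at hx

lemma abel (τ : ℕ → ℕ) (M : ℕ) :
    ∑ i ∈ range M, (2 * i + 1) * τ i + 2 * ∑ k ∈ range M, ∑ i ∈ range k, τ i
      + ∑ i ∈ range M, τ i = 2 * M * ∑ i ∈ range M, τ i := by
  induction M with
  | zero => simp
  | succ m ih =>
    simp only [Finset.sum_range_succ]
    have ih' := congrArg (Nat.cast : ℕ → ℤ) ih
    push_cast at ih'
    zify
    linear_combination ih'

lemma nstat_key {n : ℕ} {τ : ℕ → ℕ} (hτ : IsPartitionOf n τ) :
    Nstat τ + 2 * ∑ k ∈ range n, ∑ i ∈ range k, τ i + n = 2 * n * n := by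
  have := abel τ n
  rw [psum_eq hτ (le_refl n)] at this
  rw [nstat_eq hτ]
  omega

lemma sum_ge_one {a b : ℕ → ℕ} {n k : ℕ} (hk : k ∈ range n) (hle : ∀ j, a j ≤ b j)
    (h2 : a k + 2 ≤ b k) : (∑ j ∈ range n, a j) + 2 ≤ ∑ j ∈ range n, b j := by
  rw [← Finset.sum_erase_add _ a hk, ← Finset.sum_erase_add _ b hk]
  have := Finset.sum_le_sum (fun j (_ : j ∈ (range n).erase k) => hle j)
  omega

lemma sum_ge_two {a b : ℕ → ℕ} {n k l : ℕ} (hk : k ∈ range n) (hl : l ∈ range n)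
    (hkl : k ≠ l) (hle : ∀ j, a j ≤ b j) (h1 : a k < b k) (h2 : a l < b l) :
    (∑ j ∈ range n, a j) + 2 ≤ ∑ j ∈ range n, b j := by
  have hl' : l ∈ (range n).erase k := Finset.mem_erase.mpr ⟨fun h => hkl h.symm, hl⟩
  rw [← Finset.sum_erase_add _ a hk, ← Finset.sum_erase_add _ a hl',
    ← Finset.sum_erase_add _ b hk, ← Finset.sum_erase_add _ b hl']
  have := Finset.sum_le_sum (fun j (_ : j ∈ ((range n).erase k).erase l) => hle j)
  omega

lemma sum_split (f : ℕ → ℕ) {s : Finset ℕ} {i : ℕ} (hi : i ∈ s) (hi1 : i + 1 ∈ s) :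
    ∑ j ∈ s, f j = f i + f (i + 1) + ∑ j ∈ (s.erase i).erase (i + 1), f j := by
  have h1 : i + 1 ∈ s.erase i := Finset.mem_erase.mpr ⟨by omega, hi1⟩
  rw [← Finset.sum_erase_add _ _ hi, ← Finset.sum_erase_add _ _ h1]
  ring

/-- The boundary of the closure of the nilpotent orbit of Jordan type `τ` has
codimension at least `4` iff consecutive parts of `τ` differ by at most `1`. -/
theorem stmt_12 (n : ℕ) (τ : ℕ → ℕ) (hτ : IsPartitionOf n τ) :
    (∀ μ : ℕ → ℕ, IsPartitionOf n μ → Dominates μ τ → μ ≠ τ →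
      Nstat τ + 4 ≤ Nstat μ) ↔ (∀ i : ℕ, τ i ≤ τ (i + 1) + 1) := by
  constructor
  · -- (i) → (ii), contrapositive via one-box move
    intro h i
    by_contra hcon
    push_neg at hcon
    have hgap : τ (i+1) + 2 ≤ τ i := by omega
    set μ : ℕ → ℕ := fun j => if j = i then τ i - 1 else if j = i + 1 then τ (i+1) + 1 else τ j
      with hμdef
    have hμi : μ i = τ i - 1 := by simp [hμdef]
    have hμi1 : μ (i+1) = τ (i+1) + 1 := by simp [hμdef]
    have hμoff : ∀ j, j ≠ i → j ≠ i + 1 → μ j = τ j := by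
      intro j h1 h2; simp [hμdef, h1, h2]
    have hmem : i ∈ range (n + i + 2) := by simp; omega
    have hmem1 : i + 1 ∈ range (n + i + 2) := by simp
    have hRμτ : ∀ f g : ℕ → ℕ, (∀ j, j ≠ i → j ≠ i+1 → f j = g j) →
        ∑ j ∈ ((range (n+i+2)).erase i).erase (i+1), f j
          = ∑ j ∈ ((range (n+i+2)).erase i).erase (i+1), g j := by
      intro f g hfg
      apply Finset.sum_congr rfl
      intro j hj
      simp only [Finset.mem_erase] at hj
      exact hfg j hj.2.1 hj.1
    -- μ is a partition of n
    have hsupp : Function.support μ ⊆ ↑(range (n + i + 2)) := by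
      intro x hx
      simp only [Function.mem_support] at hx
      simp only [coe_range, Set.mem_Iio]
      by_contra hc
      push_neg at hc
      rw [hμoff x (by omega) (by omega)] at hx
      exact hx (part_zero hτ x (by omega))
    have hsumτ : ∑ j ∈ range (n+i+2), τ j = n := psum_eq hτ (by omega)
    have hsumμ : ∑ j ∈ range (n+i+2), μ j = n := by
      rw [sum_split μ hmem hmem1, hμi, hμi1, hRμτ μ τ hμoff]
      rw [sum_split τ hmem hmem1] at hsumτ
      omega
    have hμpart : IsPartitionOf n μ := by
      refine ⟨?_, Set.Finite.subset (Set.finite_Iio (n+i+2)) (by exact_mod_cast hsupp), ?_⟩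
      · intro j
        rcases eq_or_ne j i with rfl | hji
        · rw [hμi, hμi1]; omega
        rcases eq_or_ne j (i+1) with rfl | hji1
        · rw [hμi1, hμoff (i+1+1) (by omega) (by omega)]
          have := hτ.1 (i+1); omega
        rcases eq_or_ne (j+1) i with hj1 | hj1
        · rw [hμoff j hji hji1, hj1, hμi]
          have := hτ.1 j; rw [hj1] at this; omega
        rcases eq_or_ne (j+1) (i+1) with hj2 | hj2
        · rw [hμoff j hji hji1, hj2, hμi1]
          have hji' : j = i := by omega
          exact absurd hji' hji
        · rw [hμoff j hji hji1, hμoff (j+1) hj1 hj2]; exact hτ.1 j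
      · rw [finsum_eq_sum_of_support_subset μ hsupp]; exact hsumμ
    have hdom : Dominates μ τ := by
      intro k
      rcases le_or_gt k i with hki | hki
      · apply le_of_eq
        apply Finset.sum_congr rfl
        intro j hj
        exact hμoff j (by simp at hj; omega) (by simp at hj; omega)
      rcases eq_or_lt_of_le (Nat.succ_le_of_lt hki) with hk1 | hk1
      · -- k = i + 1
        rw [← hk1, Finset.sum_range_succ, Finset.sum_range_succ]
        have heq : ∑ j ∈ range i, μ j = ∑ j ∈ range i, τ j := by
          apply Finset.sum_congr rfl
          intro j hj
          exact hμoff j (by simp at hj; omega) (by simp at hj; omega)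
        rw [heq, hμi]
        omega
      · -- k ≥ i + 2
        have hik : i ∈ range k := by simp; omega
        have hik1 : i + 1 ∈ range k := by simp; omega
        apply le_of_eq
        rw [sum_split μ hik hik1, sum_split τ hik hik1, hμi, hμi1]
        have : ∑ j ∈ ((range k).erase i).erase (i+1), μ j
            = ∑ j ∈ ((range k).erase i).erase (i+1), τ j := by
          apply Finset.sum_congr rfl
          intro j hj
          simp only [Finset.mem_erase] at hj
          exact hμoff j hj.2.1 hj.1
        omega
    have hne : μ ≠ τ := by
      intro heq
      have := congrFun heq i
      rw [hμi] at this
      omega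
    have hkey := h μ hμpart hdom hne
    -- compute Nstat μ = Nstat τ + 2
    have hNτ : Nstat τ = (2*i+1) * τ i + (2*(i+1)+1) * τ (i+1)
        + ∑ j ∈ ((range (n+i+2)).erase i).erase (i+1), (2*j+1) * τ j := by
      rw [nstat_eq hτ]
      have : ∑ j ∈ range n, (2*j+1) * τ j = ∑ j ∈ range (n+i+2), (2*j+1) * τ j := by
        rw [← Finset.sum_range_add_sum_Ico _ (show n ≤ n+i+2 by omega)]
        have : ∑ j ∈ Finset.Ico n (n+i+2), (2*j+1) * τ j = 0 := by
          apply Finset.sum_eq_zero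
          intro j hj
          simp only [Finset.mem_Ico] at hj
          rw [part_zero hτ j hj.1]; ring
        omega
      rw [this, sum_split (fun j => (2*j+1) * τ j) hmem hmem1]
    have hNμ : Nstat μ = (2*i+1) * μ i + (2*(i+1)+1) * μ (i+1)
        + ∑ j ∈ ((range (n+i+2)).erase i).erase (i+1), (2*j+1) * μ j := by
      rw [Nstat, finsum_eq_sum_of_support_subset _ (show Function.support (fun j => (2*j+1) * μ j) ⊆ ↑(range (n+i+2)) by
        intro x hx
        simp only [Function.mem_support] at hx
        have : μ x ≠ 0 := by intro h0; rw [h0] at hx; simp at hx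
        exact hsupp this)]
      rw [sum_split (fun j => (2*j+1) * μ j) hmem hmem1]
    have hR : ∑ j ∈ ((range (n+i+2)).erase i).erase (i+1), (2*j+1) * μ j
        = ∑ j ∈ ((range (n+i+2)).erase i).erase (i+1), (2*j+1) * τ j :=
      hRμτ _ _ (fun j h1 h2 => by rw [hμoff j h1 h2])
    rw [hμi, hμi1, hR] at hNμ
    have hexp : (2*i+1) * (τ i - 1) + (2*(i+1)+1) * (τ (i+1) + 1)
        = (2*i+1) * τ i + (2*(i+1)+1) * τ (i+1) + 2 := by
      obtain ⟨c, hc⟩ : ∃ c, τ i = c + 1 := ⟨τ i - 1, by omega⟩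
      rw [hc]
      simp only [Nat.add_sub_cancel]
      ring
    omega
  · -- (ii) → (i)
    intro hii μ hμ hdom hne
    have hkτ := nstat_key hτ
    have hkμ := nstat_key hμ
    suffices h : (∑ k ∈ range n, ∑ j ∈ range k, μ j) + 2 ≤ ∑ k ∈ range n, ∑ j ∈ range k, τ j by
      omega
    -- partial sums
    set Sμ : ℕ → ℕ := fun k => ∑ j ∈ range k, μ j with hSμ
    set Sτ : ℕ → ℕ := fun k => ∑ j ∈ range k, τ j with hSτ
    have hle : ∀ k, Sμ k ≤ Sτ k := hdom
    have hSn : ∀ k, n ≤ k → Sτ k = n := fun k hk => psum_eq hτ hk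
    have hSnμ : ∀ k, n ≤ k → Sμ k = n := fun k hk => psum_eq hμ hk
    -- find k with Sμ k < Sτ k
    have hex : ∃ k, Sμ k < Sτ k := by
      by_contra hc
      push_neg at hc
      have heq : ∀ k, Sμ k = Sτ k := fun k => le_antisymm (hle k) (hc k)
      apply hne
      funext j
      have h1 := heq (j+1)
      have h2 := heq j
      simp only [hSμ, hSτ, Finset.sum_range_succ] at h1 h2
      omega
    obtain ⟨k, hk⟩ := hex
    have hk0 : 1 ≤ k := by
      rcases Nat.eq_zero_or_pos k with rfl | h
      · simp [hSμ, hSτ] at hk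
      · exact h
    have hkn : k < n := by
      by_contra hc
      push_neg at hc
      rw [hSn k hc, hSnμ k hc] at hk
      omega
    have hkmem : k ∈ range n := mem_range.mpr hkn
    rcases le_or_gt (Sμ k + 2) (Sτ k) with hbig | hsmall
    · exact sum_ge_one hkmem hle hbig
    -- Sτ k = Sμ k + 1
    by_cases htwo : ∃ l, l ∈ range n ∧ l ≠ k ∧ Sμ l < Sτ l
    · obtain ⟨l, hl, hlk, hl2⟩ := htwo
      exact sum_ge_two hkmem hl (fun h => hlk h.symm) hle hk hl2
    -- contradiction: single jump of 1 impossible when gaps ≤ 1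
    exfalso
    push_neg at htwo
    have hother : ∀ l, l ≠ k → Sμ l = Sτ l := by
      intro l hlk
      rcases lt_or_ge l n with hln | hln
      · have := htwo l (mem_range.mpr hln) hlk
        have := hle l
        omega
      · rw [hSn l hln, hSnμ l hln]
    obtain ⟨m, rfl⟩ : ∃ m, k = m + 1 := ⟨k - 1, by omega⟩
    have h1 : Sμ m = Sτ m := hother m (by omega)
    have h2 : Sμ (m+2) = Sτ (m+2) := hother (m+2) (by omega)
    have e1 : Sμ (m+1) = Sμ m + μ m := by simp [hSμ, Finset.sum_range_succ]
    have e2 : Sμ (m+2) = Sμ (m+1) + μ (m+1) := by simp [hSμ, Finset.sum_range_succ]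
    have e3 : Sτ (m+1) = Sτ m + τ m := by simp [hSτ, Finset.sum_range_succ]
    have e4 : Sτ (m+2) = Sτ (m+1) + τ (m+1) := by simp [hSτ, Finset.sum_range_succ]
    have hμm : μ (m+1) ≤ μ m := hμ.1 m
    have hgap := hii m
    omega
end

section
/- Let τ be a partition of n with τᵢ − τᵢ₊₁ ≤ 1 for all i ≥ 1. Then the partitions μ of n satisfying μ ⊴ τ, μ ≠ τ and N(μ) = N(τ) + 4 are exactly the following: for each index i with τᵢ = τᵢ₊₁ + 1 = τᵢ₊₂ + 2, the partition τ^{(i)} defined by τ^{(i)}_i = τᵢ − 1, τ^{(i)}_{i+2} = τ_{i+2} + 1, and τ^{(i)}_j = τ_j for j ∉ {i, i+2} (so that τ^{(i)}_i = τ^{(i)}_{i+1} = τ^{(i)}_{i+2} = τ_{i+1}). In particular these μ are in bijection with the set of indices i such that τᵢ = τᵢ₊₁ + 1 = τᵢ₊₂ + 2. -/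
lemma exists_bound (f : ℕ → ℕ) (h : (Function.support f).Finite) :
    ∃ B : ℕ, ∀ j, B ≤ j → f j = 0 := by
  obtain ⟨b, hb⟩ := h.bddAbove
  refine ⟨b + 1, fun j hj => ?_⟩
  by_contra hne
  exact absurd (hb (by simpa [Function.mem_support] using hne)) (by omega)

lemma sum_eq (f : ℕ → ℕ) (B : ℕ) (h : ∀ j, B ≤ j → f j = 0) :
    ∑ᶠ i, f i = ∑ i ∈ Finset.range B, f i := by
  apply finsum_eq_sum_of_support_subset
  intro x hx
  simp only [Function.mem_support] at hx
  simp only [Finset.coe_range, Set.mem_Iio]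
  by_contra h'
  exact hx (h x (by omega))

lemma nstat_eq_s13 (f : ℕ → ℕ) (B : ℕ) (h : ∀ j, B ≤ j → f j = 0) :
    (∑ᶠ i, (2 * i + 1) * f i) = ∑ i ∈ Finset.range B, (2 * i + 1) * f i := by
  apply finsum_eq_sum_of_support_subset
  intro x hx
  simp only [Function.mem_support] at hx
  simp only [Finset.coe_range, Set.mem_Iio]
  by_contra h'
  exact hx (by rw [h x (by omega)]; ring)

lemma key (B : ℕ) (f : ℕ → ℤ) :
    ∑ j ∈ Finset.range B, (2 * (j : ℤ) + 1) * f j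
      + 2 * ∑ k ∈ Finset.range B, ∑ j ∈ Finset.range k, f j
      = (2 * (B : ℤ) - 1) * ∑ j ∈ Finset.range B, f j := by
  induction B with
  | zero => simp
  | succ B ih =>
    rw [Finset.sum_range_succ, Finset.sum_range_succ,
      Finset.sum_range_succ (f := fun j => f j)]
    push_cast
    linarith [ih]


/-- If consecutive parts of `τ` differ by at most `1`, the partitions `μ ⊴ τ`, `μ ≠ τ`,
with `N(μ) = N(τ) + 4` (codimension-4 orbits in the closure) are exactly the `τ⁽ⁱ⁾`
obtained by replacing parts `(τᵢ, τᵢ₊₁, τᵢ₊₂) = (t+2, t+1, t)` by `(t+1, t+1, t+1)`,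
one for each index `i` with `τᵢ = τᵢ₊₁ + 1 = τᵢ₊₂ + 2`. -/
theorem stmt_13 (n : ℕ) (τ : ℕ → ℕ) (hτ : IsPartitionOf n τ)
    (hgap : ∀ i : ℕ, τ i ≤ τ (i + 1) + 1)
    (μ : ℕ → ℕ) (hμ : IsPartitionOf n μ) :
    (Dominates μ τ ∧ μ ≠ τ ∧ Nstat μ = Nstat τ + 4) ↔
    (∃ i : ℕ, τ i = τ (i + 1) + 1 ∧ τ i = τ (i + 2) + 2 ∧
      μ = fun j => if j = i then τ i - 1 else if j = i + 2 then τ (i + 2) + 1 else τ j) := by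
  obtain ⟨hτmono, hτfin, hτsum⟩ := hτ
  obtain ⟨hμmono, hμfin, hμsum⟩ := hμ
  obtain ⟨Bτ, hBτ⟩ := exists_bound τ hτfin
  obtain ⟨Bμ, hBμ⟩ := exists_bound μ hμfin
  constructor
  · rintro ⟨hdom, hne, hN⟩
    have hex : ∃ i, μ i ≠ τ i := by
      by_contra h; push_neg at h; exact hne (funext h)
    set i := Nat.find hex with hidef
    have hi : μ i ≠ τ i := Nat.find_spec hex
    have hmin : ∀ j, j < i → μ j = τ j := fun j hj => not_not.mp (Nat.find_min hex hj)
    set C := Bτ + Bμ + i + 3 with hCdef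
    have hτ0 : ∀ j, C ≤ j → τ j = 0 := fun j hj => hBτ j (by omega)
    have hμ0 : ∀ j, C ≤ j → μ j = 0 := fun j hj => hBμ j (by omega)
    have hτC : ∑ j ∈ Finset.range C, τ j = n := by rw [← sum_eq τ C hτ0]; exact hτsum
    have hμC : ∑ j ∈ Finset.range C, μ j = n := by rw [← sum_eq μ C hμ0]; exact hμsum
    set D : ℕ → ℤ := fun k =>
      (∑ j ∈ Finset.range k, (τ j : ℤ)) - ∑ j ∈ Finset.range k, (μ j : ℤ) with hDdef
    have castτ : ∀ k, (∑ j ∈ Finset.range k, (τ j : ℤ)) = ((∑ j ∈ Finset.range k, τ j : ℕ) : ℤ) := by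
      intro k; push_cast; rfl
    have castμ : ∀ k, (∑ j ∈ Finset.range k, (μ j : ℤ)) = ((∑ j ∈ Finset.range k, μ j : ℕ) : ℤ) := by
      intro k; push_cast; rfl
    have hD0 : ∀ k, 0 ≤ D k := by
      intro k
      have := hdom k
      simp only [hDdef, castτ, castμ, sub_nonneg]
      exact_mod_cast this
    have hDstep : ∀ k, D (k + 1) = D k + (τ k : ℤ) - (μ k : ℤ) := by
      intro k
      simp only [hDdef, Finset.sum_range_succ]
      ring
    have hDhigh : ∀ k, C ≤ k → D k = 0 := by
      intro k hk
      have hτk : ∑ j ∈ Finset.range k, τ j = n := by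
        rw [← hτC]
        exact (Finset.sum_subset (Finset.range_subset_range.mpr hk)
          (fun x _ hx => hτ0 x (by simp [Finset.mem_range] at hx; omega))).symm
      have hμk : ∑ j ∈ Finset.range k, μ j = n := by
        rw [← hμC]
        exact (Finset.sum_subset (Finset.range_subset_range.mpr hk)
          (fun x _ hx => hμ0 x (by simp [Finset.mem_range] at hx; omega))).symm
      simp only [hDdef, castτ, castμ, hτk, hμk, sub_self]
    -- total of D over range C is 2
    have hNτ' : ((Nstat τ : ℕ) : ℤ) = ∑ j ∈ Finset.range C, (2 * (j : ℤ) + 1) * (τ j : ℤ) := by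
      rw [show Nstat τ = ∑ i ∈ Finset.range C, (2 * i + 1) * τ i from nstat_eq_s13 τ C hτ0]
      push_cast; rfl
    have hNμ' : ((Nstat μ : ℕ) : ℤ) = ∑ j ∈ Finset.range C, (2 * (j : ℤ) + 1) * (μ j : ℤ) := by
      rw [show Nstat μ = ∑ i ∈ Finset.range C, (2 * i + 1) * μ i from nstat_eq_s13 μ C hμ0]
      push_cast; rfl
    have hsumD : ∑ k ∈ Finset.range C, D k = 2 := by
      have kτ := key C (fun j => (τ j : ℤ))
      have kμ := key C (fun j => (μ j : ℤ))
      have hNZ : ((Nstat μ : ℕ) : ℤ) = ((Nstat τ : ℕ) : ℤ) + 4 := by exact_mod_cast hN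
      have hτn : (∑ j ∈ Finset.range C, (τ j : ℤ)) = (n : ℤ) := by rw [castτ, hτC]
      have hμn : (∑ j ∈ Finset.range C, (μ j : ℤ)) = (n : ℤ) := by rw [castμ, hμC]
      simp only [hDdef, Finset.sum_sub_distrib]
      rw [hNτ', hNμ'] at hNZ
      rw [hτn] at kτ
      rw [hμn] at kμ
      linarith
    have hDle2 : ∀ a, a < C → D a ≤ 2 := by
      intro a ha
      calc D a ≤ ∑ k ∈ Finset.range C, D k :=
            Finset.single_le_sum (fun k _ => hD0 k) (Finset.mem_range.mpr ha)
        _ = 2 := hsumD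
    have hD1 : D (i + 1) = (τ i : ℤ) - (μ i : ℤ) := by
      have : ∑ j ∈ Finset.range i, (μ j : ℤ) = ∑ j ∈ Finset.range i, (τ j : ℤ) :=
        Finset.sum_congr rfl (fun j hj => by rw [hmin j (Finset.mem_range.mp hj)])
      simp only [hDdef, Finset.sum_range_succ, this]
      ring
    have hiC : i + 3 ≤ C := by omega
    have hD1pos : 1 ≤ D (i + 1) := by
      have h0 := hD0 (i + 1)
      have : (μ i : ℤ) ≠ (τ i : ℤ) := by exact_mod_cast hi
      omega
    have hD1le : D (i + 1) ≤ 2 := hDle2 _ (by omega)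
    have hpair : D (i + 1) + D (i + 2) ≤ 2 := by
      have hsub : ({i + 1, i + 2} : Finset ℕ) ⊆ Finset.range C := by
        intro x hx
        simp only [Finset.mem_insert, Finset.mem_singleton] at hx
        simp only [Finset.mem_range]
        omega
      have := Finset.sum_le_sum_of_subset_of_nonneg hsub (fun k _ _ => hD0 k)
      rw [Finset.sum_pair (by omega)] at this
      omega
    rcases (by omega : D (i + 1) = 2 ∨ D (i + 1) = 1) with h2case | h1case
    · -- impossible case: D (i+1) = 2
      exfalso
      have hz : ∑ k ∈ Finset.range C \ {i + 1}, D k = 0 := by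
        have hsub : ({i + 1} : Finset ℕ) ⊆ Finset.range C := by
          simp only [Finset.singleton_subset_iff, Finset.mem_range]; omega
        have := Finset.sum_sdiff hsub (f := D)
        rw [Finset.sum_singleton, hsumD, h2case] at this
        omega
      have hD2 : D (i + 2) = 0 := by
        refine (Finset.sum_eq_zero_iff_of_nonneg (fun k _ => hD0 k)).mp hz (i + 2) ?_
        simp only [Finset.mem_sdiff, Finset.mem_range, Finset.mem_singleton]
        omega
      have hstep : D (i + 2) = D (i + 1) + (τ (i + 1) : ℤ) - (μ (i + 1) : ℤ) := hDstep (i + 1)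
      rw [hD2, h2case] at hstep
      have c1 : (μ (i + 1) : ℤ) ≤ (μ i : ℤ) := by exact_mod_cast hμmono i
      have c2 : (τ i : ℤ) ≤ (τ (i + 1) : ℤ) + 1 := by exact_mod_cast hgap i
      rw [hD1] at h2case
      omega
    · -- main case: D (i+1) = 1
      have hμi : (μ i : ℤ) = (τ i : ℤ) - 1 := by rw [hD1] at h1case; omega
      have hD2ge : 1 ≤ D (i + 2) := by
        have hstep : D (i + 2) = D (i + 1) + (τ (i + 1) : ℤ) - (μ (i + 1) : ℤ) := hDstep (i + 1)
        have c1 : (μ (i + 1) : ℤ) ≤ (μ i : ℤ) := by exact_mod_cast hμmono i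
        have c2 : (τ i : ℤ) ≤ (τ (i + 1) : ℤ) + 1 := by exact_mod_cast hgap i
        rw [h1case] at hstep
        omega
      have hD2 : D (i + 2) = 1 := by omega
      have hμi1 : (μ (i + 1) : ℤ) = (τ (i + 1) : ℤ) := by
        have hstep : D (i + 2) = D (i + 1) + (τ (i + 1) : ℤ) - (μ (i + 1) : ℤ) := hDstep (i + 1)
        rw [h1case, hD2] at hstep
        omega
      have hz : ∑ k ∈ Finset.range C \ {i + 1, i + 2}, D k = 0 := by
        have hsub : ({i + 1, i + 2} : Finset ℕ) ⊆ Finset.range C := by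
          intro x hx
          simp only [Finset.mem_insert, Finset.mem_singleton] at hx
          simp only [Finset.mem_range]
          omega
        have := Finset.sum_sdiff hsub (f := D)
        rw [Finset.sum_pair (by omega), hsumD, h1case, hD2] at this
        omega
      have Dz : ∀ k, k ≠ i + 1 → k ≠ i + 2 → D k = 0 := by
        intro k hk1 hk2
        by_cases hk : k < C
        · refine (Finset.sum_eq_zero_iff_of_nonneg (fun k _ => hD0 k)).mp hz k ?_
          simp only [Finset.mem_sdiff, Finset.mem_range, Finset.mem_insert, Finset.mem_singleton]
          omega
        · exact hDhigh k (by omega)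
      have hμi2 : (μ (i + 2) : ℤ) = (τ (i + 2) : ℤ) + 1 := by
        have hstep : D (i + 3) = D (i + 2) + (τ (i + 2) : ℤ) - (μ (i + 2) : ℤ) := hDstep (i + 2)
        rw [hD2, Dz (i + 3) (by omega) (by omega)] at hstep
        omega
      have hrest : ∀ k, i + 3 ≤ k → μ k = τ k := by
        intro k hk
        have hstep := hDstep k
        rw [Dz k (by omega) (by omega), Dz (k + 1) (by omega) (by omega)] at hstep
        omega
      have c1 : (μ (i + 1) : ℤ) ≤ (μ i : ℤ) := by exact_mod_cast hμmono i
      have c2 : (μ (i + 2) : ℤ) ≤ (μ (i + 1) : ℤ) := by exact_mod_cast hμmono (i + 1)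
      have g1 : (τ i : ℤ) ≤ (τ (i + 1) : ℤ) + 1 := by exact_mod_cast hgap i
      have g2 : (τ (i + 1) : ℤ) ≤ (τ (i + 2) : ℤ) + 1 := by exact_mod_cast hgap (i + 1)
      refine ⟨i, by omega, by omega, funext fun j => ?_⟩
      show μ j = if j = i then τ i - 1 else if j = i + 2 then τ (i + 2) + 1 else τ j
      by_cases hji : j = i
      · subst hji; rw [if_pos rfl]; omega
      by_cases hji2 : j = i + 2
      · subst hji2; rw [if_neg (by omega), if_pos rfl]; omega
      rw [if_neg hji, if_neg hji2]
      rcases Nat.lt_or_ge j i with h | h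
      · exact hmin j h
      rcases (by omega : j = i + 1 ∨ i + 3 ≤ j) with h | h
      · subst h; exact_mod_cast hμi1
      · exact hrest j h
  · rintro ⟨i, h1, h2, hμeq⟩
    have hμval : ∀ j, μ j = if j = i then τ i - 1 else if j = i + 2 then τ (i + 2) + 1 else τ j :=
      fun j => by rw [hμeq]
    have hτi : 2 ≤ τ i := by omega
    have hg : ∀ j, (μ j : ℤ) - (τ j : ℤ) =
        (if j = i then (-1 : ℤ) else 0) + (if j = i + 2 then (1 : ℤ) else 0) := by
      intro j
      rw [hμval j]
      by_cases ha : j = i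
      · rw [if_pos ha, if_pos ha, if_neg (by omega), ha]; omega
      · rw [if_neg ha, if_neg ha]
        by_cases hb : j = i + 2
        · rw [if_pos hb, if_pos hb, hb]; omega
        · rw [if_neg hb, if_neg hb]; omega
    refine ⟨?_, ?_, ?_⟩
    · intro k
      have hE : (∑ j ∈ Finset.range k, (μ j : ℤ)) - (∑ j ∈ Finset.range k, (τ j : ℤ)) =
          (if i ∈ Finset.range k then (-1 : ℤ) else 0)
            + (if i + 2 ∈ Finset.range k then (1 : ℤ) else 0) := by
        rw [← Finset.sum_sub_distrib, Finset.sum_congr rfl (fun j _ => hg j),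
          Finset.sum_add_distrib, Finset.sum_ite_eq', Finset.sum_ite_eq']
      have hc1 : (∑ j ∈ Finset.range k, (μ j : ℤ)) = ((∑ j ∈ Finset.range k, μ j : ℕ) : ℤ) := by
        push_cast; rfl
      have hc2 : (∑ j ∈ Finset.range k, (τ j : ℤ)) = ((∑ j ∈ Finset.range k, τ j : ℕ) : ℤ) := by
        push_cast; rfl
      rw [hc1, hc2] at hE
      simp only [Finset.mem_range] at hE
      split_ifs at hE <;> omega
    · intro hcontra
      have := congrFun hcontra i
      rw [hμval i, if_pos rfl] at this
      omega
    · set B := Bτ + i + 3 with hBdef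
      have hτ0 : ∀ j, B ≤ j → τ j = 0 := fun j hj => hBτ j (by omega)
      have hμ0 : ∀ j, B ≤ j → μ j = 0 := fun j hj => by
        rw [hμval j, if_neg (by omega), if_neg (by omega)]; exact hτ0 j hj
      have eτ : Nstat τ = ∑ j ∈ Finset.range B, (2 * j + 1) * τ j := nstat_eq_s13 τ B hτ0
      have eμ : Nstat μ = ∑ j ∈ Finset.range B, (2 * j + 1) * μ j := nstat_eq_s13 μ B hμ0
      have key2 : (∑ j ∈ Finset.range B, (2 * (j : ℤ) + 1) * (μ j : ℤ))
          - ∑ j ∈ Finset.range B, (2 * (j : ℤ) + 1) * (τ j : ℤ) = 4 := by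
        rw [← Finset.sum_sub_distrib]
        have step : ∀ j ∈ Finset.range B,
            (2 * (j : ℤ) + 1) * (μ j : ℤ) - (2 * (j : ℤ) + 1) * (τ j : ℤ) =
            (if j = i then -(2 * (i : ℤ) + 1) else 0)
              + (if j = i + 2 then (2 * (i : ℤ) + 5) else 0) := by
          intro j _
          rw [← mul_sub, hg j]
          by_cases ha : j = i
          · rw [if_pos ha, if_pos ha, if_neg (by omega), if_neg (by omega), ha]; ring
          · rw [if_neg ha, if_neg ha]
            by_cases hb : j = i + 2
            · rw [if_pos hb, if_pos hb, hb]; push_cast; ring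
            · rw [if_neg hb, if_neg hb]; ring
        rw [Finset.sum_congr rfl step, Finset.sum_add_distrib,
          Finset.sum_ite_eq', Finset.sum_ite_eq',
          if_pos (Finset.mem_range.mpr (by omega : i < B)),
          if_pos (Finset.mem_range.mpr (by omega : i + 2 < B))]
        ring
      have cμ : ((∑ j ∈ Finset.range B, (2 * j + 1) * μ j : ℕ) : ℤ)
          = ∑ j ∈ Finset.range B, (2 * (j : ℤ) + 1) * (μ j : ℤ) := by push_cast; rfl
      have cτ : ((∑ j ∈ Finset.range B, (2 * j + 1) * τ j : ℕ) : ℤ)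
          = ∑ j ∈ Finset.range B, (2 * (j : ℤ) + 1) * (τ j : ℤ) := by push_cast; rfl
      rw [eτ, eμ]
      omega
end

section
/- For every integer m ≥ 1, the 3m × 3m complex matrix I₃ ⊗ J_m + E₁₃ ⊗ I_m (Kronecker products, where E₁₃ ∈ M₃(ℂ) is the matrix unit with 1 in position (1,3) and 0 elsewhere) is conjugate in GL_{3m}(ℂ) to the block-diagonal matrix J_{m+1} ⊕ J_m ⊕ J_{m−1} (the block J_{m−1} being absent when m = 1). In other words, adding the rank-m coupling E₁₃ ⊗ I_m to a nilpotent with three Jordan blocks of size m produces a nilpotent with Jordan type (m+1, m, m−1). -/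
/-!
In the basis `e_{a,j}` of `ℂ³ ⊗ ℂᵐ`, the matrix `A = I₃ ⊗ J_m + E₁₃ ⊗ I_m` acts by
`e_{a,j} ↦ e_{a,j-1} + [a = 2] e_{0,j}`. Hence `A` shifts down each of the three Jordan
chains `u_k = e_{2,k-1} + (m - k) e_{0,k}` (`0 ≤ k ≤ m`), `e_{1,k}` (`0 ≤ k < m`) and
`w_k = e_{2,k} - (k + 1) e_{0,k+1}` (`0 ≤ k < m - 1`), of lengths `m + 1`, `m`, `m - 1`.
They form a basis, since `e_{0,j} = (u_j - w_{j-1}) / m` and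
`e_{2,j} = ((j + 1) u_{j+1} + (m - j - 1) w_j) / m`.
-/

open Matrix Kronecker

noncomputable def Jmat (m : ℕ) : Matrix (Fin m) (Fin m) ℂ :=
  Matrix.of fun i j => if (j : ℕ) = (i : ℕ) + 1 then 1 else 0

section JordanChain

variable {ι : Type*}

-- Chains are indexed by `ℤ`, so that the vector below the bottom of a chain is `v (-1) = 0`.
def chainMat (v : ℤ → ι → ℂ) (n : ℕ) : Matrix ι (Fin n) ℂ := of fun x k => v k x

def chainCoord (n : ℕ) (k : ℤ) : Fin n → ℂ := fun i => if (i : ℤ) = k then 1 else 0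

theorem chainMat_mul_Jmat (v : ℤ → ι → ℂ) (n : ℕ) (hv : v (-1) = 0) :
    chainMat v n * Jmat n = chainMat (fun k => v (k - 1)) n := by
  ext x k
  simp only [chainMat, Jmat, mul_apply, of_apply, mul_ite, mul_one, mul_zero]
  rcases Nat.eq_zero_or_pos k with hk | hk
  · simp [hk, hv]
  · rw [Finset.sum_eq_single ⟨k - 1, by omega⟩]
    · rw [if_pos (by simp; omega)]; simp [Nat.cast_sub hk]
    · exact fun j _ hj => if_neg fun h => hj (by ext; simp; omega)
    · simp

theorem mul_chainMat_eq_chainMat_mul_Jmat [Fintype ι] (M : Matrix ι ι ℂ) (v : ℤ → ι → ℂ)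
    (n : ℕ) (hv : v (-1) = 0) (hM : ∀ k : ℕ, k < n → M *ᵥ v k = v (k - 1)) :
    M * chainMat v n = chainMat v n * Jmat n := by
  rw [chainMat_mul_Jmat v n hv]
  ext x k
  simp [chainMat, mul_apply, ← hM k k.isLt, mulVec, dotProduct]

theorem chainMat_mulVec_chainCoord [Fintype ι] (v : ℤ → ι → ℂ) {n : ℕ} {k : ℤ}
    (hv : v (-1) = 0) (hk : -1 ≤ k) (hkn : k < n) : chainMat v n *ᵥ chainCoord n k = v k := by
  funext x
  simp only [chainMat, chainCoord, mulVec, dotProduct, of_apply, mul_ite, mul_one, mul_zero]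
  rcases (show k = -1 ∨ 0 ≤ k by omega) with rfl | hk
  · simp [hv]
  · lift k to ℕ using hk
    rw [Finset.sum_eq_single ⟨k, by omega⟩] <;> simp +contextual [Fin.ext_iff]

end JordanChain

theorem Jmat_mulVec_apply {m : ℕ} (v : Fin m → ℂ) (i : Fin m) :
    (Jmat m *ᵥ v) i = if h : (i : ℕ) + 1 < m then v ⟨i + 1, h⟩ else 0 := by
  simp only [mulVec, dotProduct, Jmat, of_apply, ite_mul, one_mul, zero_mul]
  split_ifs with h
  · rw [Finset.sum_eq_single ⟨i + 1, h⟩] <;> simp +contextual [Fin.ext_iff]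
  · exact Finset.sum_eq_zero fun j _ => if_neg (by omega)

theorem one_kronecker_mulVec_apply {R ι κ : Type*} [Semiring R] [Fintype ι] [DecidableEq ι]
    [Fintype κ] (M : Matrix κ κ R) (v : ι × κ → R) (a : ι) (i : κ) :
    (((1 : Matrix ι ι R) ⊗ₖ M) *ᵥ v) (a, i) = (M *ᵥ fun j => v (a, j)) i := by
  simp [mulVec, dotProduct, Fintype.sum_prod_type, one_apply]

theorem kronecker_one_mulVec_apply {R ι κ : Type*} [Semiring R] [Fintype ι] [DecidableEq κ]
    [Fintype κ] (M : Matrix ι ι R) (v : ι × κ → R) (a : ι) (i : κ) :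
    ((M ⊗ₖ (1 : Matrix κ κ R)) *ᵥ v) (a, i) = (M *ᵥ fun b => v (b, i)) a := by
  simp [mulVec, dotProduct, Fintype.sum_prod_type, one_apply]

section CoupledNilpotent

variable (m : ℕ)

noncomputable def coupledNilp : Matrix (Fin 3 × Fin m) (Fin 3 × Fin m) ℂ :=
  (1 : Matrix (Fin 3) (Fin 3) ℂ) ⊗ₖ Jmat m + single 0 2 1 ⊗ₖ 1

-- `e_{a,j}`, which is zero when `j` is out of range.
def basisVec (a : Fin 3) (j : ℤ) : Fin 3 × Fin m → ℂ :=
  fun x => if x.1 = a ∧ (x.2 : ℤ) = j then 1 else 0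

variable {m}

theorem coupledNilp_mulVec_apply (v : Fin 3 × Fin m → ℂ) (a : Fin 3) (i : Fin m) :
    (coupledNilp m *ᵥ v) (a, i) =
      (if h : (i : ℕ) + 1 < m then v (a, ⟨i + 1, h⟩) else 0) +
        if a = 0 then v (2, i) else 0 := by
  rw [coupledNilp, add_mulVec, Pi.add_apply, one_kronecker_mulVec_apply,
    kronecker_one_mulVec_apply, Jmat_mulVec_apply]
  fin_cases a <;> simp [mulVec, dotProduct, single_apply]

theorem coupledNilp_mulVec_basisVec (a : Fin 3) {j : ℤ} (hj : j < m) :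
    coupledNilp m *ᵥ basisVec m a j =
      basisVec m a (j - 1) + if a = 2 then basisVec m 0 j else 0 := by
  funext ⟨b, i⟩
  rw [coupledNilp_mulVec_apply]
  fin_cases a <;> fin_cases b <;> simp [basisVec] <;> split_ifs <;> first | omega | norm_num

theorem basisVec_of_neg (a : Fin 3) {j : ℤ} (hj : j < 0) : basisVec m a j = 0 := by
  funext x; simp only [basisVec, Pi.zero_apply]; rw [if_neg]; omega

theorem basisVec_eq_one_apply (x y : Fin 3 × Fin m) :
    basisVec m x.1 x.2 y = (1 : Matrix (Fin 3 × Fin m) (Fin 3 × Fin m) ℂ) y x := by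
  simp [basisVec, one_apply, Prod.ext_iff, Fin.ext_iff]

variable (m)

noncomputable def longChain (k : ℤ) : Fin 3 × Fin m → ℂ :=
  basisVec m 2 (k - 1) + ((m : ℂ) - k) • basisVec m 0 k

def middleChain (k : ℤ) : Fin 3 × Fin m → ℂ := basisVec m 1 k

noncomputable def shortChain (k : ℤ) : Fin 3 × Fin m → ℂ :=
  basisVec m 2 k - ((k : ℂ) + 1) • basisVec m 0 (k + 1)

theorem longChain_neg_one : longChain m (-1) = 0 := by
  simp [longChain, basisVec_of_neg]

theorem middleChain_neg_one : middleChain m (-1) = 0 := by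
  simp [middleChain, basisVec_of_neg]

theorem shortChain_neg_one : shortChain m (-1) = 0 := by
  simp [shortChain, basisVec_of_neg]

variable {m}

theorem coupledNilp_mulVec_longChain {k : ℕ} (hk : k < m + 1) :
    coupledNilp m *ᵥ longChain m k = longChain m (k - 1) := by
  have htop : ((m : ℂ) - (k : ℤ)) • (coupledNilp m *ᵥ basisVec m 0 k) =
      ((m : ℂ) - (k : ℤ)) • basisVec m 0 (k - 1) := by
    rcases Nat.lt_succ_iff_lt_or_eq.mp hk with hk | rfl
    · rw [coupledNilp_mulVec_basisVec _ (by exact_mod_cast hk)]; simp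
    · simp
  rw [longChain, mulVec_add, mulVec_smul, htop, coupledNilp_mulVec_basisVec _ (by omega)]
  simp only [longChain]
  push_cast
  module

theorem coupledNilp_mulVec_middleChain {k : ℕ} (hk : k < m) :
    coupledNilp m *ᵥ middleChain m k = middleChain m (k - 1) := by
  rw [middleChain, coupledNilp_mulVec_basisVec _ (by omega)]
  simp [middleChain]

theorem coupledNilp_mulVec_shortChain {k : ℕ} (hk : k < m - 1) :
    coupledNilp m *ᵥ shortChain m k = shortChain m (k - 1) := by
  rw [shortChain, mulVec_sub, mulVec_smul, coupledNilp_mulVec_basisVec _ (by omega),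
    coupledNilp_mulVec_basisVec _ (by omega)]
  simp only [shortChain, add_sub_cancel_right, sub_add_cancel]
  push_cast
  module

variable (m)

abbrev ChainIndex : Type := Fin (m + 1) ⊕ (Fin m ⊕ Fin (m - 1))

noncomputable def chainBasis : Matrix (Fin 3 × Fin m) (ChainIndex m) ℂ :=
  fromCols (chainMat (longChain m) (m + 1))
    (fromCols (chainMat (middleChain m) m) (chainMat (shortChain m) (m - 1)))

noncomputable def chainDual (x : Fin 3 × Fin m) : ChainIndex m → ℂ :=
  ![Sum.elim ((m : ℂ)⁻¹ • chainCoord (m + 1) x.2)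
      (Sum.elim 0 (-(m : ℂ)⁻¹ • chainCoord (m - 1) (x.2 - 1))),
    Sum.elim 0 (Sum.elim (chainCoord m x.2) 0),
    Sum.elim (((x.2 + 1 : ℂ) / m) • chainCoord (m + 1) (x.2 + 1))
      (Sum.elim 0 (((m - x.2 - 1 : ℂ) / m) • chainCoord (m - 1) x.2))] x.1

theorem coupledNilp_mul_chainBasis :
    coupledNilp m * chainBasis m =
      chainBasis m * fromBlocks (Jmat (m + 1)) 0 0 (fromBlocks (Jmat m) 0 0 (Jmat (m - 1))) := by
  simp only [chainBasis, mul_fromCols, fromCols_mul_fromBlocks, Matrix.mul_zero, add_zero,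
    zero_add]
  rw [mul_chainMat_eq_chainMat_mul_Jmat _ _ _ (longChain_neg_one m)
      fun k hk => coupledNilp_mulVec_longChain hk,
    mul_chainMat_eq_chainMat_mul_Jmat _ _ _ (middleChain_neg_one m)
      fun k hk => coupledNilp_mulVec_middleChain hk,
    mul_chainMat_eq_chainMat_mul_Jmat _ _ _ (shortChain_neg_one m)
      fun k hk => coupledNilp_mulVec_shortChain hk]

variable {m}

theorem chainBasis_mulVec_chainDual (hm : 1 ≤ m) (x : Fin 3 × Fin m) :
    chainBasis m *ᵥ chainDual m x = basisVec m x.1 x.2 := by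
  obtain ⟨a, j⟩ := x
  have hm0 : (m : ℂ) ≠ 0 := by exact_mod_cast (by omega : m ≠ 0)
  have hj := j.isLt
  fin_cases a
  · simp only [chainDual, chainBasis, Fin.zero_eta, Matrix.cons_val_zero,
      fromCols_mulVec_sumElim, mulVec_smul, mulVec_zero]
    rw [chainMat_mulVec_chainCoord _ (longChain_neg_one m) (by omega) (by omega),
      chainMat_mulVec_chainCoord _ (shortChain_neg_one m) (by omega) (by omega)]
    simp only [longChain, shortChain, sub_add_cancel]
    match_scalars <;> field_simp <;> ring
  · simp only [chainDual, chainBasis, Fin.mk_one, Matrix.cons_val_one, Matrix.cons_val_zero,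
      fromCols_mulVec_sumElim, mulVec_zero]
    rw [chainMat_mulVec_chainCoord _ (middleChain_neg_one m) (by omega) (by omega)]
    simp [middleChain]
  · simp only [chainDual, chainBasis, Fin.reduceFinMk, Matrix.cons_val_two, Matrix.tail_cons,
      Matrix.head_cons, fromCols_mulVec_sumElim, mulVec_smul, mulVec_zero, zero_add]
    rw [chainMat_mulVec_chainCoord _ (longChain_neg_one m) (by omega) (by omega)]
    rcases (show (j : ℕ) + 1 < m ∨ (j : ℕ) + 1 = m by omega) with hj' | hj'
    · rw [chainMat_mulVec_chainCoord _ (shortChain_neg_one m) (by omega) (by omega)]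
      simp only [longChain, shortChain, add_sub_cancel_right]
      push_cast
      match_scalars <;> field_simp <;> ring
    · -- `j = m - 1`: the coefficient `m - j - 1` of the (out-of-range) short-chain term vanishes.
      have hm' : (m : ℂ) = j + 1 := by exact_mod_cast hj'.symm
      simp only [longChain, add_sub_cancel_right, hm']
      push_cast
      match_scalars <;> field_simp <;> ring

theorem chainBasis_mul_chainDual (hm : 1 ≤ m) :
    chainBasis m * of (fun c x => chainDual m x c) = 1 := by
  ext y x
  rw [← basisVec_eq_one_apply, ← chainBasis_mulVec_chainDual hm x]
  rfl

end CoupledNilpotent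

/-- `I₃ ⊗ J_m + E₁₃ ⊗ I_m` is conjugate in `GL_{3m}(ℂ)` to `J_{m+1} ⊕ J_m ⊕ J_{m−1}`. -/
theorem stmt_14 (m : ℕ) (hm : 1 ≤ m) :
    ∃ (P : Matrix (Fin 3 × Fin m) (Fin (m + 1) ⊕ (Fin m ⊕ Fin (m - 1))) ℂ)
      (Q : Matrix (Fin (m + 1) ⊕ (Fin m ⊕ Fin (m - 1))) (Fin 3 × Fin m) ℂ),
      P * Q = 1 ∧ Q * P = 1 ∧
      (1 : Matrix (Fin 3) (Fin 3) ℂ) ⊗ₖ Jmat m +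
          (Matrix.single (0 : Fin 3) (2 : Fin 3) (1 : ℂ)) ⊗ₖ
            (1 : Matrix (Fin m) (Fin m) ℂ) =
        P * Matrix.fromBlocks (Jmat (m + 1)) 0 0
              (Matrix.fromBlocks (Jmat m) 0 0 (Jmat (m - 1))) * Q := by
  have hPQ := chainBasis_mul_chainDual hm
  have hcard : Fintype.card (Fin 3 × Fin m) = Fintype.card (ChainIndex m) := by
    simp only [Fintype.card_prod, Fintype.card_sum, Fintype.card_fin]
    omega
  refine ⟨chainBasis m, of fun c x => chainDual m x c, hPQ,
    (mul_eq_one_comm_of_equiv (Fintype.equivOfCardEq hcard)).mp hPQ, ?_⟩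
  rw [← coupledNilp_mul_chainBasis, Matrix.mul_assoc, hPQ, Matrix.mul_one, coupledNilp]
end

section
/- Let θ : ℂ⁴ → ℂ⁴ be a linear involution (θ² = id) with ω(θx, θy) = −ω(x, y) for all x, y and with θγ = γ⁻¹θ. Then each of the three maps θ, γθ, γ²θ is a linear involution satisfying ω(s·x, s·y) = −ω(x, y), their fixed subspaces F₀ = Fix(θ), F₁ = Fix(γθ), F₂ = Fix(γ²θ) are 2-dimensional totally isotropic (Lagrangian) subspaces of (ℂ⁴, ω), these three subspaces pairwise intersect in {0}, and γ permutes them cyclically and transitively: γ(F₀) = F₂, γ(F₂) = F₁, γ(F₁) = F₀. -/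
/-!
Since `θ` inverts `γ` and `γ` preserves `ω`, the maps `γθ` and `γ²θ` are again anti-symplectic
involutions. For an anti-symplectic involution `S` both eigenspaces `ker (S ∓ 1)` are isotropic,
hence of dimension at most 2, while `range (S + 1) ≤ ker (S - 1)`; rank–nullity then makes
`ker (S - 1)` Lagrangian. Two of the three fixed spaces meet inside a fixed space of `γ` or `γ²`,
which is zero, and `γ` intertwines each of `θ, γθ, γ²θ` with another one of them.
-/

open Matrix

/-- The symplectic form on `ℂ⁴` with `ω(e₁,e₃) = ω(e₂,e₄) = 1` and the other listed
pairings zero. -/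
noncomputable def omega4 (x y : Fin 4 → ℂ) : ℂ :=
  x 0 * y 2 - x 2 * y 0 + x 1 * y 3 - x 3 * y 1

/-- The linear map `γ = diag(ζ, ζ, ζ⁻¹, ζ⁻¹)` on `ℂ⁴`. -/
noncomputable def Gam (ζ : ℂ) : (Fin 4 → ℂ) →ₗ[ℂ] (Fin 4 → ℂ) :=
  Matrix.mulVecLin (Matrix.diagonal ![ζ, ζ, ζ⁻¹, ζ⁻¹])

open Module
open LinearMap (ker range)

section Dihedral

variable {M : Type*} [Monoid M] {g h t : M}

theorem mul_mul_self_eq_one_of_mul_eq_mul (hgh : g * h = 1) (ht : t * t = 1)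
    (htg : t * g = h * t) : g * t * (g * t) = 1 := by
  rw [mul_assoc, ← mul_assoc t, htg, ← mul_assoc, ← mul_assoc, hgh, one_mul, ht]

theorem mul_mul_eq_of_mul_eq_mul (hgh : g * h = 1) (htg : t * g = h * t) : g * t * g = t := by
  rw [mul_assoc, htg, ← mul_assoc, hgh, one_mul]

theorem mul_mul_eq_mul_mul_of_mul_eq_mul (hgh : g * h = 1) (hhg : h * g = 1)
    (htg : t * g = h * t) : g * t * g = h * (g * t) := by
  rw [mul_mul_eq_of_mul_eq_mul hgh htg, ← mul_assoc, hhg, one_mul]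

end Dihedral

section FixedSpace

variable {R V : Type*} [Semiring R] [AddCommGroup V] [Module R V]

theorem mem_ker_sub_one {S : Module.End R V} {x : V} : x ∈ ker (S - 1) ↔ S x = x := by
  rw [LinearMap.mem_ker, LinearMap.sub_apply, Module.End.one_apply, sub_eq_zero]

theorem ker_sub_one_inf_ker_mul_sub_one_le (g S : Module.End R V) :
    ker (S - 1) ⊓ ker (g * S - 1) ≤ ker (g - 1) := by
  rintro x ⟨hS, hgS⟩
  rw [SetLike.mem_coe, mem_ker_sub_one] at hS
  rw [SetLike.mem_coe, mem_ker_sub_one, Module.End.mul_apply, hS] at hgS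
  exact mem_ker_sub_one.2 hgS

theorem map_ker_sub_one_of_mul_eq {g h S S' : Module.End R V} (hgh : g * h = 1) (hhg : h * g = 1)
    (hS : S' * g = g * S) : (ker (S - 1)).map g = ker (S' - 1) := by
  have hS' : S * h = h * S' := by
    calc S * h = h * g * S * h := by rw [hhg, one_mul]
      _ = h * (S' * g) * h := by rw [hS, mul_assoc h g S]
      _ = h * S' := by rw [mul_assoc, mul_assoc, hgh, mul_one]
  ext y
  simp only [Submodule.mem_map, mem_ker_sub_one]
  constructor
  · rintro ⟨x, hx, rfl⟩
    rw [← Module.End.mul_apply, hS, Module.End.mul_apply, hx]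
  · intro hy
    refine ⟨h y, ?_, ?_⟩
    · rw [← Module.End.mul_apply, hS', Module.End.mul_apply, hy]
    · rw [← Module.End.mul_apply, hgh, Module.End.one_apply]

end FixedSpace

section Antisymplectic

variable {K V : Type*} [Field K] [AddCommGroup V] [Module K V]
  {B : LinearMap.BilinForm K V} {S : Module.End K V}

theorem apply_eq_zero_of_apply_eq_smul [NeZero (2 : K)] (hS : ∀ x y, B (S x) (S y) = -B x y)
    {c : K} (hc : c * c = 1) {x y : V} (hx : S x = c • x) (hy : S y = c • y) : B x y = 0 := by
  have h := hS x y
  rw [hx, hy, map_smul, map_smul, LinearMap.smul_apply, smul_eq_mul, smul_eq_mul, ← mul_assoc,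
    hc, one_mul, eq_neg_iff_add_eq_zero, ← two_mul] at h
  exact (mul_eq_zero.1 h).resolve_left two_ne_zero

theorem isotropic_ker_sub_one [NeZero (2 : K)] (hS : ∀ x y, B (S x) (S y) = -B x y) :
    ∀ x ∈ ker (S - 1), ∀ y ∈ ker (S - 1), B x y = 0 := by
  intro x hx y hy
  rw [mem_ker_sub_one] at hx hy
  exact apply_eq_zero_of_apply_eq_smul hS (mul_one 1)
    (by rw [hx, one_smul]) (by rw [hy, one_smul])

theorem isotropic_ker_add_one [NeZero (2 : K)] (hS : ∀ x y, B (S x) (S y) = -B x y) :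
    ∀ x ∈ ker (S + 1), ∀ y ∈ ker (S + 1), B x y = 0 := by
  intro x hx y hy
  rw [LinearMap.mem_ker, LinearMap.add_apply, Module.End.one_apply,
    add_eq_zero_iff_eq_neg] at hx hy
  exact apply_eq_zero_of_apply_eq_smul hS (by norm_num : (-1 : K) * -1 = 1)
    (by rw [hx, neg_one_smul]) (by rw [hy, neg_one_smul])

variable [FiniteDimensional K V]

theorem two_mul_finrank_le_of_isotropic (hB : B.Nondegenerate) {W : Submodule K V}
    (hW : ∀ x ∈ W, ∀ y ∈ W, B x y = 0) : 2 * finrank K W ≤ finrank K V := by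
  have hle : finrank K W ≤ finrank K (B.orthogonal W) :=
    Submodule.finrank_mono fun y hy x hx => hW x hx y hy
  rw [LinearMap.BilinForm.finrank_orthogonal hB] at hle
  have := Submodule.finrank_le W
  omega

theorem two_mul_finrank_ker_sub_one [NeZero (2 : K)] (hB : B.Nondegenerate) (hS2 : S * S = 1)
    (hS : ∀ x y, B (S x) (S y) = -B x y) : 2 * finrank K (ker (S - 1)) = finrank K V := by
  have hrange : range (S + 1) ≤ ker (S - 1) := by
    rintro _ ⟨x, rfl⟩
    rw [LinearMap.mem_ker, ← Module.End.mul_apply, sub_mul, mul_add, hS2, mul_one, one_mul,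
      add_comm, sub_self, LinearMap.zero_apply]
  have hle := Submodule.finrank_mono hrange
  have hrank := LinearMap.finrank_range_add_finrank_ker (S + 1)
  have hfix := two_mul_finrank_le_of_isotropic hB (isotropic_ker_sub_one hS)
  have hanti := two_mul_finrank_le_of_isotropic hB (isotropic_ker_add_one hS)
  omega

end Antisymplectic

theorem Gam_apply (c : ℂ) (x : Fin 4 → ℂ) (i : Fin 4) :
    Gam c x i = ![c, c, c⁻¹, c⁻¹] i * x i := by
  simp [Gam, Matrix.mulVec_diagonal]

theorem Gam_mul (a b : ℂ) : Gam a * Gam b = Gam (a * b) := by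
  ext x i
  fin_cases i <;> simp [Gam_apply, mul_assoc, mul_left_comm]

theorem Gam_one : Gam 1 = 1 := by
  ext x i
  fin_cases i <;> simp [Gam_apply]

theorem omega4_Gam {c : ℂ} (hc : c ≠ 0) (x y : Fin 4 → ℂ) :
    omega4 (Gam c x) (Gam c y) = omega4 x y := by
  simp only [omega4, Gam_apply, Fin.isValue, cons_val_zero, cons_val_one, cons_val]
  field_simp

theorem ker_Gam_sub_one {c : ℂ} (hc : c ≠ 1) : ker (Gam c - 1) = ⊥ := by
  have hc' : c⁻¹ ≠ 1 := inv_ne_one.2 hc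
  refine (Submodule.eq_bot_iff _).2 fun x hx => ?_
  rw [mem_ker_sub_one] at hx
  ext i
  have hi := congrFun hx i
  rw [Gam_apply] at hi
  fin_cases i <;> simpa [mul_left_eq_self₀, hc, hc'] using hi

noncomputable def omega4Form : LinearMap.BilinForm ℂ (Fin 4 → ℂ) :=
  LinearMap.mk₂ ℂ omega4 (fun _ _ _ => by simp only [omega4, Pi.add_apply]; ring)
    (fun _ _ _ => by simp only [omega4, Pi.smul_apply, smul_eq_mul]; ring)
    (fun _ _ _ => by simp only [omega4, Pi.add_apply]; ring)
    (fun _ _ _ => by simp only [omega4, Pi.smul_apply, smul_eq_mul]; ring)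

theorem omega4Form_nondegenerate : omega4Form.Nondegenerate := by
  have hrefl : omega4Form.IsRefl := fun x y h => by
    simp only [omega4Form, LinearMap.mk₂_apply, omega4] at h ⊢
    linear_combination -h
  refine hrefl.nondegenerate_iff_separatingLeft.2 fun x hx => ?_
  have h := fun i => hx (Pi.single i 1)
  simp only [omega4Form, LinearMap.mk₂_apply, omega4] at h
  ext i
  fin_cases i
  · simpa using h 2
  · simpa using h 3
  · simpa using h 0
  · simpa using h 1

theorem finrank_ker_sub_one_eq_two_of_omega4 {S : Module.End ℂ (Fin 4 → ℂ)} (hS2 : S * S = 1)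
    (hS : ∀ x y, omega4 (S x) (S y) = -omega4 x y) : finrank ℂ (ker (S - 1)) = 2 := by
  have := two_mul_finrank_ker_sub_one (B := omega4Form) omega4Form_nondegenerate hS2 hS
  rw [Module.finrank_fin_fun] at this
  omega

/-- For `ζ` a primitive cube root of unity and `θ` an anti-symplectic linear involution
of `(ℂ⁴, ω)` with `θγ = γ⁻¹θ`: the maps `θ, γθ, γ²θ` are anti-symplectic involutions,
their fixed subspaces are 2-dimensional totally isotropic (Lagrangian) subspaces with
pairwise zero intersection, and `γ` permutes them cyclically:
`γ(F₀) = F₂`, `γ(F₂) = F₁`, `γ(F₁) = F₀`. -/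
theorem stmt_15 (ζ : ℂ) (hζ3 : ζ ^ 3 = 1) (hζ1 : ζ ≠ 1)
    (θ : (Fin 4 → ℂ) →ₗ[ℂ] (Fin 4 → ℂ))
    (hθ2 : θ ∘ₗ θ = LinearMap.id)
    (hθanti : ∀ x y : Fin 4 → ℂ, omega4 (θ x) (θ y) = -omega4 x y)
    (hθΓ : θ ∘ₗ Gam ζ = Gam ζ⁻¹ ∘ₗ θ) :
    ((Gam ζ ∘ₗ θ) ∘ₗ (Gam ζ ∘ₗ θ) = LinearMap.id) ∧
    ((Gam ζ ∘ₗ (Gam ζ ∘ₗ θ)) ∘ₗ (Gam ζ ∘ₗ (Gam ζ ∘ₗ θ)) = LinearMap.id) ∧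
    (∀ x y : Fin 4 → ℂ, omega4 ((Gam ζ ∘ₗ θ) x) ((Gam ζ ∘ₗ θ) y) = -omega4 x y) ∧
    (∀ x y : Fin 4 → ℂ,
      omega4 ((Gam ζ ∘ₗ (Gam ζ ∘ₗ θ)) x) ((Gam ζ ∘ₗ (Gam ζ ∘ₗ θ)) y) = -omega4 x y) ∧
    (∀ x ∈ LinearMap.ker (θ - LinearMap.id),
      ∀ y ∈ LinearMap.ker (θ - LinearMap.id), omega4 x y = 0) ∧
    (∀ x ∈ LinearMap.ker (Gam ζ ∘ₗ θ - LinearMap.id),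
      ∀ y ∈ LinearMap.ker (Gam ζ ∘ₗ θ - LinearMap.id), omega4 x y = 0) ∧
    (∀ x ∈ LinearMap.ker (Gam ζ ∘ₗ (Gam ζ ∘ₗ θ) - LinearMap.id),
      ∀ y ∈ LinearMap.ker (Gam ζ ∘ₗ (Gam ζ ∘ₗ θ) - LinearMap.id), omega4 x y = 0) ∧
    Module.finrank ℂ (LinearMap.ker (θ - LinearMap.id)) = 2 ∧
    Module.finrank ℂ (LinearMap.ker (Gam ζ ∘ₗ θ - LinearMap.id)) = 2 ∧
    Module.finrank ℂ (LinearMap.ker (Gam ζ ∘ₗ (Gam ζ ∘ₗ θ) - LinearMap.id)) = 2 ∧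
    (LinearMap.ker (θ - LinearMap.id) ⊓
      LinearMap.ker (Gam ζ ∘ₗ θ - LinearMap.id) = ⊥) ∧
    (LinearMap.ker (θ - LinearMap.id) ⊓
      LinearMap.ker (Gam ζ ∘ₗ (Gam ζ ∘ₗ θ) - LinearMap.id) = ⊥) ∧
    (LinearMap.ker (Gam ζ ∘ₗ θ - LinearMap.id) ⊓
      LinearMap.ker (Gam ζ ∘ₗ (Gam ζ ∘ₗ θ) - LinearMap.id) = ⊥) ∧
    Submodule.map (Gam ζ) (LinearMap.ker (θ - LinearMap.id)) =
      LinearMap.ker (Gam ζ ∘ₗ (Gam ζ ∘ₗ θ) - LinearMap.id) ∧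
    Submodule.map (Gam ζ) (LinearMap.ker (Gam ζ ∘ₗ (Gam ζ ∘ₗ θ) - LinearMap.id)) =
      LinearMap.ker (Gam ζ ∘ₗ θ - LinearMap.id) ∧
    Submodule.map (Gam ζ) (LinearMap.ker (Gam ζ ∘ₗ θ - LinearMap.id)) =
      LinearMap.ker (θ - LinearMap.id) := by
  have hζ0 : ζ ≠ 0 := by rintro rfl; norm_num at hζ3
  have hgh : Gam ζ * Gam ζ⁻¹ = 1 := by rw [Gam_mul, mul_inv_cancel₀ hζ0, Gam_one]
  have hhg : Gam ζ⁻¹ * Gam ζ = 1 := by rw [Gam_mul, inv_mul_cancel₀ hζ0, Gam_one]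
  have hζζ : ζ * ζ = ζ⁻¹ := eq_inv_of_mul_eq_one_left (by rw [← pow_three', hζ3])
  have hgg : Gam ζ * Gam ζ = Gam ζ⁻¹ := by rw [Gam_mul, hζζ]
  have hθ : θ * Gam ζ = Gam ζ⁻¹ * θ := hθΓ
  have hγθ := mul_mul_eq_mul_mul_of_mul_eq_mul hgh hhg hθ
  have hγθ2 : Gam ζ * θ * (Gam ζ * θ) = 1 := mul_mul_self_eq_one_of_mul_eq_mul hgh hθ2 hθ
  have hγγθ2 := mul_mul_self_eq_one_of_mul_eq_mul hgh hγθ2 hγθ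
  have hγθanti x y : omega4 (Gam ζ (θ x)) (Gam ζ (θ y)) = -omega4 x y := by
    rw [omega4_Gam hζ0, hθanti]
  have hγγθanti x y : omega4 (Gam ζ (Gam ζ (θ x))) (Gam ζ (Gam ζ (θ y))) = -omega4 x y := by
    rw [omega4_Gam hζ0, hγθanti]
  have hγF₂ : Gam ζ * θ * Gam ζ = Gam ζ * (Gam ζ * (Gam ζ * θ)) := by
    rw [mul_mul_eq_of_mul_eq_mul hgh hθ, ← mul_assoc (Gam ζ), hgg, ← mul_assoc, hhg, one_mul]
  have hγF₁ : θ * Gam ζ = Gam ζ * (Gam ζ * θ) := by rw [hθ, ← hgg, mul_assoc]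
  refine ⟨hγθ2, hγγθ2, hγθanti, hγγθanti, isotropic_ker_sub_one (B := omega4Form) hθanti,
    isotropic_ker_sub_one (B := omega4Form) hγθanti,
    isotropic_ker_sub_one (B := omega4Form) hγγθanti,
    finrank_ker_sub_one_eq_two_of_omega4 hθ2 hθanti,
    finrank_ker_sub_one_eq_two_of_omega4 hγθ2 hγθanti,
    finrank_ker_sub_one_eq_two_of_omega4 hγγθ2 hγγθanti,
    eq_bot_iff.2 ((ker_sub_one_inf_ker_mul_sub_one_le _ _).trans (ker_Gam_sub_one hζ1).le),
    eq_bot_iff.2 ((ker_sub_one_inf_ker_mul_sub_one_le (Gam ζ * Gam ζ) θ).trans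
      (by rw [hgg, ker_Gam_sub_one (inv_ne_one.2 hζ1)])),
    eq_bot_iff.2 ((ker_sub_one_inf_ker_mul_sub_one_le _ _).trans (ker_Gam_sub_one hζ1).le),
    map_ker_sub_one_of_mul_eq hgh hhg (mul_mul_eq_of_mul_eq_mul hgh hγθ),
    map_ker_sub_one_of_mul_eq hgh hhg hγF₂, map_ker_sub_one_of_mul_eq hgh hhg hγF₁⟩
end

section
/- Suppose V ⊆ A is a ℂ-subspace with 1 ∈ V such that: (a) A is spanned by the sets f(Uᵢ)·V for i ≥ 0 (i.e., A = Σᵢ span{f(u)v : u ∈ Uᵢ, v ∈ V}); (b) f(u)v − v f(u) ∈ V for all u ∈ U₁ and v ∈ V; (c) there is a fixed integer k ≥ 1 with V·V ⊆ span(f(U_k)·V). Define subspaces Aᵢ := f(Uᵢ) for 0 ≤ i < k and Aᵢ := f(Uᵢ) + span(f(U_{i−k})·V) for i ≥ k. Then (Aᵢ)_{i≥0} is an exhaustive increasing filtration of A (Aᵢ ⊆ Aᵢ₊₁ and ⋃ᵢ Aᵢ = A) with 1 ∈ A₀ and Aᵢ·Aⱼ ⊆ A_{i+j} for all i, j ≥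 0, and f(Uᵢ) ⊆ Aᵢ, so f is a filtered algebra homomorphism. -/
/-- Construction of a good algebra filtration: given a filtered algebra `U` generated in
degree `1`, an algebra map `f : U → A`, and a generating subspace `V ∋ 1` of `A` with
`[f(U₁), V] ⊆ V` and `V·V ⊆ f(U_k)·V`, the subspaces `Aᵢ = f(Uᵢ)` for `i < k` and
`Aᵢ = f(Uᵢ) + f(U_{i−k})·V` for `i ≥ k` form an exhaustive increasing algebra filtration
of `A` containing `1` in degree `0` and making `f` filtered. -/
theorem stmt_16 {U A : Type*} [Ring U] [Algebra ℂ U] [Ring A] [Algebra ℂ A]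
    (Ufil : ℕ → Submodule ℂ U)
    (hUmono : Monotone Ufil)
    (hUexh : ∀ u : U, ∃ i, u ∈ Ufil i)
    (hUone : (1 : U) ∈ Ufil 0)
    (hUmul : ∀ i j, Ufil i * Ufil j ≤ Ufil (i + j))
    (hUgen : ∀ i, Ufil i = Ufil 1 ^ i)
    (f : U →ₐ[ℂ] A)
    (V : Submodule ℂ A) (hV1 : (1 : A) ∈ V)
    (ha : ∀ x : A, ∃ i, x ∈ Submodule.map f.toLinearMap (Ufil i) * V)
    (hb : ∀ u ∈ Ufil 1, ∀ v ∈ V, f u * v - v * f u ∈ V)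
    (k : ℕ) (hk : 1 ≤ k)
    (hc : V * V ≤ Submodule.map f.toLinearMap (Ufil k) * V)
    (Afil : ℕ → Submodule ℂ A)
    (hAfil : ∀ i, Afil i =
      if i < k then Submodule.map f.toLinearMap (Ufil i)
      else Submodule.map f.toLinearMap (Ufil i) ⊔
        Submodule.map f.toLinearMap (Ufil (i - k)) * V) :
    Monotone Afil ∧
    (∀ x : A, ∃ i, x ∈ Afil i) ∧
    (1 : A) ∈ Afil 0 ∧
    (∀ i j, Afil i * Afil j ≤ Afil (i + j)) ∧
    (∀ i, Submodule.map f.toLinearMap (Ufil i) ≤ Afil i) := by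
  set F : ℕ → Submodule ℂ A := fun i => Submodule.map f.toLinearMap (Ufil i) with hF
  have hFmono : ∀ {i j}, i ≤ j → F i ≤ F j := fun h => Submodule.map_mono (hUmono h)
  have hFmul : ∀ i j, F i * F j ≤ F (i + j) := by
    intro i j
    rw [hF]
    simp only
    rw [← Submodule.map_mul]
    exact Submodule.map_mono (hUmul i j)
  -- f(U_i) ⊆ A_i
  have hFA : ∀ i, F i ≤ Afil i := by
    intro i
    rw [hAfil]
    split
    · exact le_rfl
    · exact le_sup_left
  -- F m * V ≤ Afil (m + k)
  have hFVA : ∀ m, F m * V ≤ Afil (m + k) := by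
    intro m
    rw [hAfil]
    have h1 : ¬ (m + k < k) := by omega
    have h2 : m + k - k = m := by omega
    simp only [h1, if_false, h2]
    exact le_sup_right
  -- V ≤ F 0 * V
  have hVF0 : V ≤ F 0 * V := by
    intro v hv
    have : v = f 1 * v := by simp
    rw [this]
    exact Submodule.mul_mem_mul ⟨1, hUone, by simp⟩ hv
  -- V * F 1 ≤ F 1 * V
  have hVF1 : V * F 1 ≤ F 1 * V := by
    rw [Submodule.mul_le]
    rintro v hv y ⟨u, hu, rfl⟩
    have heq : v * f.toLinearMap u = f u * v - (f u * v - v * f u) := by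
      simp only [AlgHom.toLinearMap_apply, sub_sub_cancel]
    rw [heq]
    refine sub_mem (Submodule.mul_mem_mul ⟨u, hu, rfl⟩ hv) ?_
    exact mul_le_mul' (hFmono (Nat.zero_le 1)) le_rfl
      (hVF0 (hb u hu v hv))
  -- F (j+1) = F j * F 1
  have hFsucc : ∀ j, F (j + 1) = F j * F 1 := by
    intro j
    have : Ufil (j + 1) = Ufil j * Ufil 1 := by
      rw [hUgen (j + 1), hUgen j, pow_succ]
    rw [hF]
    simp only
    rw [this, Submodule.map_mul]
  -- V * F j ≤ F j * V
  have hcomm : ∀ j, V * F j ≤ F j * V := by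
    intro j
    induction j with
    | zero =>
      rw [Submodule.mul_le]
      rintro v hv y ⟨u, hu, rfl⟩
      have hu' : u ∈ (1 : Submodule ℂ U) := by
        rw [← pow_zero (Ufil 1), ← hUgen 0]; exact hu
      obtain ⟨c, rfl⟩ := Submodule.mem_one.mp hu'
      have : v * f.toLinearMap (algebraMap ℂ U c) =
          f.toLinearMap (algebraMap ℂ U c) * v := by
        simp only [AlgHom.toLinearMap_apply, AlgHom.commutes]
        exact (Algebra.commutes c v).symm
      rw [this]
      exact Submodule.mul_mem_mul ⟨algebraMap ℂ U c, hu, rfl⟩ hv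
    | succ j ih =>
      rw [hFsucc j, ← mul_assoc]
      calc V * F j * F 1 ≤ F j * V * F 1 := mul_le_mul' ih le_rfl
        _ = F j * (V * F 1) := mul_assoc _ _ _
        _ ≤ F j * (F 1 * V) := mul_le_mul' le_rfl hVF1
        _ = F j * F 1 * V := (mul_assoc _ _ _).symm
  refine ⟨?_, ?_, ?_, ?_, hFA⟩
  · -- Monotone
    apply monotone_nat_of_le_succ
    intro i
    rw [hAfil i, hAfil (i + 1)]
    by_cases h1 : i < k
    · by_cases h2 : i + 1 < k
      · simp only [h1, if_true, h2, if_true]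
        exact hFmono (Nat.le_succ i)
      · simp only [h1, if_true, h2, if_false]
        exact le_trans (hFmono (Nat.le_succ i)) le_sup_left
    · have h2 : ¬ (i + 1 < k) := by omega
      simp only [h1, if_false, h2, if_false]
      exact sup_le_sup (hFmono (Nat.le_succ i))
        (mul_le_mul' (hFmono (by omega)) le_rfl)
  · -- Exhaustive
    intro x
    obtain ⟨i, hx⟩ := ha x
    exact ⟨i + k, hFVA i hx⟩
  · -- 1 ∈ Afil 0
    rw [hAfil 0]
    have h0 : 0 < k := hk
    simp only [h0, if_true]
    exact ⟨1, hUone, by simp⟩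
  · -- multiplicativity
    intro i j
    rw [hAfil i, hAfil j]
    have key1 : F i * F j ≤ Afil (i + j) :=
      le_trans (hFmul i j) (hFA (i + j))
    by_cases h1 : i < k
    · by_cases h2 : j < k
      · simp only [h1, if_true, h2, if_true]
        exact key1
      · simp only [h1, if_true, h2, if_false]
        rw [Submodule.mul_sup]
        refine sup_le key1 ?_
        have : F i * (F (j - k) * V) ≤ F (i + (j - k)) * V := by
          rw [← mul_assoc]
          exact mul_le_mul' (hFmul i (j - k)) le_rfl
        refine le_trans this (le_trans (hFVA (i + (j - k))) ?_)
        have : i + (j - k) + k = i + j := by omega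
        rw [this]
    · by_cases h2 : j < k
      · simp only [h1, if_false, h2, if_true]
        rw [Submodule.sup_mul]
        refine sup_le key1 ?_
        have : F (i - k) * V * F j ≤ F (i - k + j) * V :=
          calc F (i - k) * V * F j = F (i - k) * (V * F j) := mul_assoc _ _ _
            _ ≤ F (i - k) * (F j * V) := mul_le_mul' le_rfl (hcomm j)
            _ = F (i - k) * F j * V := (mul_assoc _ _ _).symm
            _ ≤ F (i - k + j) * V := mul_le_mul' (hFmul _ _) le_rfl
        refine le_trans this (le_trans (hFVA (i - k + j)) ?_)
        have : i - k + j + k = i + j := by omega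
        rw [this]
      · simp only [h1, if_false, h2, if_false]
        rw [Submodule.sup_mul, Submodule.mul_sup, Submodule.mul_sup]
        refine sup_le (sup_le key1 ?_) (sup_le ?_ ?_)
        · -- F i * (F (j-k) * V)
          have : F i * (F (j - k) * V) ≤ F (i + (j - k)) * V := by
            rw [← mul_assoc]
            exact mul_le_mul' (hFmul i (j - k)) le_rfl
          refine le_trans this (le_trans (hFVA (i + (j - k))) ?_)
          have : i + (j - k) + k = i + j := by omega
          rw [this]
        · -- (F (i-k) * V) * F j
          have : F (i - k) * V * F j ≤ F (i - k + j) * V :=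
            calc F (i - k) * V * F j = F (i - k) * (V * F j) := mul_assoc _ _ _
              _ ≤ F (i - k) * (F j * V) := mul_le_mul' le_rfl (hcomm j)
              _ = F (i - k) * F j * V := (mul_assoc _ _ _).symm
              _ ≤ F (i - k + j) * V := mul_le_mul' (hFmul _ _) le_rfl
          refine le_trans this (le_trans (hFVA (i - k + j)) ?_)
          have : i - k + j + k = i + j := by omega
          rw [this]
        · -- (F (i-k) * V) * (F (j-k) * V)
          have : F (i - k) * V * (F (j - k) * V) ≤ F (i + j - k - k + k) * V :=
            calc F (i - k) * V * (F (j - k) * V)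
                = F (i - k) * (V * F (j - k)) * V := by
                  rw [mul_assoc, mul_assoc, mul_assoc]
              _ ≤ F (i - k) * (F (j - k) * V) * V :=
                  mul_le_mul' (mul_le_mul' le_rfl (hcomm _)) le_rfl
              _ = F (i - k) * F (j - k) * (V * V) := by
                  rw [mul_assoc, mul_assoc, mul_assoc]
              _ ≤ F (i - k + (j - k)) * (F k * V) :=
                  mul_le_mul' (hFmul _ _) hc
              _ = F (i - k + (j - k)) * F k * V := (mul_assoc _ _ _).symm
              _ ≤ F (i - k + (j - k) + k) * V :=
                  mul_le_mul' (hFmul _ _) le_rfl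
              _ = F (i + j - k - k + k) * V := by
                  congr 2
                  omega
          refine le_trans this (le_trans (hFVA _) ?_)
          have : i + j - k - k + k + k = i + j := by omega
          rw [this]
end
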